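/- arXiv:2402.17143 — 3 statements merged into one kernel-verified Lean document; each statement's English description precedes it below -/
import Mathlib

section
/- Consider the energy plus flow time objective with α = 2 and unit-work jobs (p_j = 1). For each integer n ≥ 1, let Ĵ_n be the instance of n unit jobs in which one job is released at time 0 and the remaining n − 1 jobs are released at time 1/√n, and let 𝒥' be the instance consisting only of the single unit job released at time 0. Every non-anticipatory deterministic algorithm with predictions 𝒜 that is exactly optimal on the correctly predicted instance, i.e. cost(𝒜(Ĵ_n, Ĵ_n), Ĵ_n) = OPT(Ĵ_n), satisfies cost(𝒜(Ĵ_n, 𝒥'), 𝒥') ≥ ((√n + 1/√n)/2)·OPT(𝒥'). In particular, no 1-consistent algorithm is o(√n)-robust, even when all jobs have unit-size work and 𝒥 ⊆ Ĵ. -/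
/-!
An algorithm that is exactly optimal on `Ĵ_n` must finish the job `j₀` by time `ε = 1/√n`.
Indeed, pointwise AM–GM `σ² + k ≥ 2√k σ`, applied between consecutive completion times (where `k`
jobs are still alive), shows that a schedule of `Ĵ_n` doing only `w < 1` units of work before `ε`
costs at least `w²√n + ε + 2((1 - w)√n + ∑_{k<n} √k)`, whereas running the jobs one after the
other at speed `√(number of unfinished jobs)` costs `√n + ε + 2 ∑_{k<n} √k`, less by `(1 - w)²√n`.
By non-anticipation the algorithm also finishes `j₀` by `ε` on the instance `{j₀}`, which by
Cauchy–Schwarz costs at least `ε + 1/ε = √n + 1/√n`, while `OPT {j₀} ≤ 2`.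
-/

open MeasureTheory Finset
open scoped ENNReal BigOperators Classical

/-- A job: identifier, release time, processing time. -/
structure Job where
  id : ℕ
  r : ℝ
  p : ℝ

noncomputable instance : DecidableEq Job := Classical.decEq _

/-- An instance is valid when release times are nonnegative and processing
times are positive. -/
def ValidInstance (J : Finset Job) : Prop :=
  ∀ j ∈ J, 0 ≤ j.r ∧ 0 < j.p

/-- A schedule: speed functions for jobs. -/
abbrev Sched := Job → ℝ → ℝ

/-- `S` is a feasible schedule for the instance `J`. -/
def Feasible (J : Finset Job) (S : Sched) : Prop :=
  ∀ j ∈ J, Measurable (S j) ∧ (∀ t, 0 ≤ S j t) ∧ (∀ t, t < j.r → S j t = 0) ∧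
    (∫ t in Set.Ici j.r, S j t) = j.p

/-- Work profile of job `j` under schedule `S`: remaining work at time `t`. -/
noncomputable def work (S : Sched) (j : Job) (t : ℝ) : ℝ :=
  j.p - ∫ u in Set.Icc j.r t, S j u

/-- Energy consumption of schedule `S` on instance `J`, with exponent `α = 2`. -/
noncomputable def energy (J : Finset Job) (S : Sched) : ℝ≥0∞ :=
  ∫⁻ t in Set.Ioi (0 : ℝ), ENNReal.ofReal ((∑ j ∈ J, S j t) ^ 2)

/-- Completion time of job `j` under schedule `S`:
`inf {t ≥ r_j : w_j^S(t) = 0}` (equal to `∞` if `j` is never completed). -/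
noncomputable def ctime (S : Sched) (j : Job) : ℝ≥0∞ :=
  ⨅ (t : ℝ) (_ : j.r ≤ t ∧ work S j t = 0), ENNReal.ofReal t

/-- Total flow time `Σ_j (c_j^S − r_j)` of schedule `S` on instance `J`. -/
noncomputable def flowTime (S : Sched) (J : Finset Job) : ℝ≥0∞ :=
  ∑ j ∈ J, (ctime S j - ENNReal.ofReal j.r)

/-- Energy plus (total) flow time cost, with `α = 2`. -/
noncomputable def cost (S : Sched) (J : Finset Job) : ℝ≥0∞ :=
  energy J S + flowTime S J

/-- Optimal (offline) energy plus flow time cost of an instance. -/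
noncomputable def OPT (J : Finset Job) : ℝ≥0∞ :=
  ⨅ (S : Sched) (_ : Feasible J S), cost S J

/-- Jobs of `J` released at or before time `t`. -/
noncomputable def restrictLE (J : Finset Job) (t : ℝ) : Finset Job :=
  J.filter fun j => j.r ≤ t

/-- A deterministic algorithm with predictions maps a pair
(prediction, true instance) to a schedule for the true instance. -/
abbrev AlgP := Finset Job → Finset Job → Sched

/-- The algorithm always returns a feasible schedule for the true instance. -/
def AlgFeasible (A : AlgP) : Prop :=
  ∀ Jhat J : Finset Job, Feasible J (A Jhat J)

/-- Non-anticipation: if two instances agree on the jobs released at or before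
time `t`, the algorithm assigns the same speeds on `[0,t]` to these jobs. -/
def NonAnticipatory (A : AlgP) : Prop :=
  ∀ (Jhat J J' : Finset Job) (t : ℝ), restrictLE J t = restrictLE J' t →
    ∀ j ∈ restrictLE J t, ∀ u ≤ t, A Jhat J j u = A Jhat J' j u

open Set

lemma ofReal_integral_le_lintegral_ofReal {α : Type*} [MeasurableSpace α] {μ : Measure α}
    {f : α → ℝ} (hf : ∀ x, 0 ≤ f x) :
    ENNReal.ofReal (∫ x, f x ∂μ) ≤ ∫⁻ x, ENNReal.ofReal (f x) ∂μ :=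
  (Real.ofReal_le_enorm _).trans <| (enorm_integral_le_lintegral_enorm f).trans_eq <|
    lintegral_congr fun x => Real.enorm_of_nonneg (hf x)

/-- Integrated AM–GM `f² + k ≥ 2√k f`. -/
lemma ofReal_two_mul_sqrt_mul_integral_le {f : ℝ → ℝ} (hf : ∀ t, 0 ≤ f t) {k : ℝ} (hk : 0 ≤ k)
    (a b : ℝ) :
    ENNReal.ofReal (2 * √k * ∫ t in Ioc a b, f t) ≤
      (∫⁻ t in Ioc a b, ENNReal.ofReal (f t ^ 2)) + ENNReal.ofReal (k * (b - a)) := by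
  have amgm : ∀ t,
      ENNReal.ofReal (2 * √k * f t) ≤ ENNReal.ofReal (f t ^ 2) + ENNReal.ofReal k := by
    intro t
    rw [← ENNReal.ofReal_add (sq_nonneg _) hk]
    exact ENNReal.ofReal_le_ofReal (by nlinarith [sq_nonneg (f t - √k), Real.sq_sqrt hk])
  calc ENNReal.ofReal (2 * √k * ∫ t in Ioc a b, f t)
      = ENNReal.ofReal (∫ t in Ioc a b, 2 * √k * f t) := by rw [integral_const_mul]
    _ ≤ ∫⁻ t in Ioc a b, ENNReal.ofReal (2 * √k * f t) :=
        ofReal_integral_le_lintegral_ofReal fun t => by have := hf t; positivity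
    _ ≤ ∫⁻ t in Ioc a b, (ENNReal.ofReal (f t ^ 2) + ENNReal.ofReal k) := lintegral_mono amgm
    _ = _ := by
        rw [lintegral_add_right _ measurable_const, setLIntegral_const, Real.volume_Ioc,
          ← ENNReal.ofReal_mul hk]

/-- Cauchy–Schwarz, from the AM–GM bound with `k = (w / (b - a))²`. -/
lemma ofReal_sq_div_le_lintegral_sq {f : ℝ → ℝ} (hf : ∀ t, 0 ≤ f t) {a b w : ℝ} (hw : 0 ≤ w)
    (hwf : w ≤ ∫ t in Ioc a b, f t) :
    ENNReal.ofReal (w ^ 2 / (b - a)) ≤ ∫⁻ t in Ioc a b, ENNReal.ofReal (f t ^ 2) := by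
  rcases le_or_gt b a with hba | hab
  · rw [ENNReal.ofReal_of_nonpos (div_nonpos_of_nonneg_of_nonpos (sq_nonneg w) (by linarith))]
    exact zero_le
  have hd : 0 < b - a := by linarith
  have key := ofReal_two_mul_sqrt_mul_integral_le hf (sq_nonneg (w / (b - a))) a b
  rw [Real.sqrt_sq (by positivity)] at key
  refine ENNReal.le_of_add_le_add_right (a := ENNReal.ofReal (w ^ 2 / (b - a)))
    ENNReal.ofReal_ne_top ?_
  calc ENNReal.ofReal (w ^ 2 / (b - a)) + ENNReal.ofReal (w ^ 2 / (b - a))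
      = ENNReal.ofReal (2 * (w / (b - a)) * w) := by
        rw [← ENNReal.ofReal_add (by positivity) (by positivity)]; congr 1; ring
    _ ≤ ENNReal.ofReal (2 * (w / (b - a)) * ∫ t in Ioc a b, f t) :=
        ENNReal.ofReal_le_ofReal (by gcongr)
    _ ≤ _ := key.trans_eq (by congr 2; field_simp)

lemma setIntegral_Ioc_add_setIntegral_Ioc {f : ℝ → ℝ} (hf : Integrable f) {a b c : ℝ}
    (hab : a ≤ b) (hbc : b ≤ c) :
    (∫ t in Ioc a b, f t) + ∫ t in Ioc b c, f t = ∫ t in Ioc a c, f t := by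
  rw [← setIntegral_union (Ioc_disjoint_Ioc_of_le le_rfl) measurableSet_Ioc hf.integrableOn
    hf.integrableOn, Ioc_union_Ioc_eq_Ioc hab hbc]

lemma lintegral_Ioi_eq_lintegral_Ioc_add {f : ℝ → ℝ≥0∞} {a b : ℝ} (hab : a ≤ b) :
    ∫⁻ t in Ioi a, f t = (∫⁻ t in Ioc a b, f t) + ∫⁻ t in Ioi b, f t := by
  rw [← Ioc_union_Ioi_eq_Ioi hab, lintegral_union measurableSet_Ioi Ioc_disjoint_Ioi_same]

lemma antitoneOn_add_one_div : AntitoneOn (fun x : ℝ => x + 1 / x) (Ioc 0 1) := by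
  intro c ⟨hc, _⟩ e ⟨he, he1⟩ hce
  have key : e - c ≤ 1 / c - 1 / e := by
    rw [div_sub_div _ _ hc.ne' he.ne', le_div_iff₀ (by positivity)]
    nlinarith [mul_nonneg (sub_nonneg.2 hce)
      (sub_nonneg.2 (mul_le_one₀ (hce.trans he1) he.le he1))]
  dsimp only
  linarith

lemma sum_sub_eq_card_mul_add_sum_erase {ι R : Type*} [CommRing R] {J : Finset ι} {j : ι}
    (hj : j ∈ J) (τ : ι → R) (a : R) :
    ∑ i ∈ J, (τ i - a) = #J * (τ j - a) + ∑ i ∈ J.erase j, (τ i - τ j) := by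
  calc ∑ i ∈ J, (τ i - a) = ∑ i ∈ J, ((τ i - τ j) + (τ j - a)) :=
        sum_congr rfl fun i _ => by ring
    _ = _ := by rw [sum_add_distrib, sum_const, nsmul_eq_mul, ← sum_erase_add J _ hj, sub_self,
        add_zero, add_comm]

lemma sum_range_sqrt_sub (n : ℕ) :
    ∑ k ∈ range n, √((n : ℝ) - k) = √n + ∑ k ∈ range n, √(k : ℝ) := by
  induction n with
  | zero => simp
  | succ n ih =>
    rw [sum_range_succ', sum_range_succ]
    push_cast
    simp only [add_sub_add_right_eq_sub, ih, sub_zero]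
    ring

lemma sum_range_sum_range_succ {R : Type*} [CommRing R] (g : ℕ → R) (n : ℕ) :
    ∑ k ∈ range n, ∑ m ∈ range (k + 1), g m = ∑ m ∈ range n, ((n : R) - m) * g m := by
  simp only [range_eq_Ico]
  rw [← sum_Ico_Ico_comm]
  refine sum_congr rfl fun m hm => ?_
  rw [sum_const, Nat.card_Ico, nsmul_eq_mul, Nat.cast_sub (mem_Ico.mp hm).2.le]

lemma sq_sum_eq_sum_sq_of_mul_eq_zero {ι R : Type*} [CommSemiring R] {s : Finset ι} {f : ι → R}
    (h : ∀ i ∈ s, ∀ j ∈ s, i ≠ j → f i * f j = 0) :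
    (∑ i ∈ s, f i) ^ 2 = ∑ i ∈ s, f i ^ 2 := by
  rw [sq, sum_mul_sum]
  refine sum_congr rfl fun i hi => ?_
  rw [sum_eq_single_of_mem i hi fun j hj hji => h i hi j hj hji.symm, sq]

lemma Finset.exists_rank {α : Type*} (s : Finset α) {a : α} (ha : a ∈ s) :
    ∃ rk : α → ℕ, Set.InjOn rk s ∧ (∀ x ∈ s, rk x < #s) ∧ rk a = 0 := by
  let f : α → ℕ := fun x => if h : x ∈ s then s.equivFin ⟨x, h⟩ else 0
  have hf : Set.InjOn f s := fun x hx y hy h => by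
    dsimp only [f] at h
    rw [dif_pos (mem_coe.mp hx), dif_pos (mem_coe.mp hy)] at h
    exact congrArg Subtype.val (s.equivFin.injective (Fin.ext h))
  have hlt : ∀ x ∈ s, f x < #s := fun x hx => by simp [f, hx]
  refine ⟨Equiv.swap 0 (f a) ∘ f, (Equiv.injective _).comp_injOn hf, fun x hx => ?_, by simp⟩
  rw [Function.comp_apply, Equiv.swap_apply_def]
  split_ifs
  exacts [hlt a ha, card_pos.mpr ⟨a, ha⟩, hlt x hx]

lemma Finset.sum_comp_eq_sum_range {ι M : Type*} [AddCommMonoid M] {s : Finset ι} {rk : ι → ℕ}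
    (hrk : Set.InjOn rk s) (hlt : ∀ x ∈ s, rk x < #s) (F : ℕ → M) :
    ∑ x ∈ s, F (rk x) = ∑ k ∈ range #s, F k := by
  have himage : s.image rk = range #s := eq_of_subset_of_card_le
    (fun k hk => by obtain ⟨x, hx, rfl⟩ := mem_image.mp hk; exact mem_range.mpr (hlt x hx))
    (by rw [card_range, card_image_of_injOn hrk])
  rw [← himage, sum_image hrk]

section CompletionTimes

/-! Here `σ` is a total speed profile, `τ j` the completion time of job `j`, and the hypothesis
`#{j ∈ J | τ j ≤ t} - c ≤ ∫ x in Ioc a t, σ x` says that each job completed by `t` needed one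
unit of work, of which at most `c` units in total were done before `a`. -/

variable {ι : Type*} {σ : ℝ → ℝ} {τ : ι → ℝ} {J : Finset ι} {j : ι} {a c : ℝ}

lemma one_sub_le_setIntegral_of_mem (hj : j ∈ J)
    (hwork : ∀ t, (#{i ∈ J | τ i ≤ t} : ℝ) - c ≤ ∫ x in Ioc a t, σ x) :
    1 - c ≤ ∫ x in Ioc a (τ j), σ x := by
  have hdone : (1 : ℝ) ≤ #{i ∈ J | τ i ≤ τ j} := by
    exact_mod_cast card_pos.mpr ⟨j, (mem_filter.mpr ⟨hj, le_rfl⟩ : j ∈ {i ∈ J | τ i ≤ τ j})⟩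
  linarith [hwork (τ j)]

lemma card_completed_erase_sub_le (hσi : Integrable σ) (hj : j ∈ J)
    (hmin : ∀ i ∈ J, τ j ≤ τ i) (haj : a ≤ τ j)
    (hwork : ∀ t, (#{i ∈ J | τ i ≤ t} : ℝ) - c ≤ ∫ x in Ioc a t, σ x) (t : ℝ) :
    (#{i ∈ J.erase j | τ i ≤ t} : ℝ) - (c + (∫ x in Ioc a (τ j), σ x) - 1) ≤
      ∫ x in Ioc (τ j) t, σ x := by
  rcases lt_or_ge t (τ j) with htj | hjt
  · have hempty : {i ∈ J.erase j | τ i ≤ t} = ∅ := filter_eq_empty_iff.mpr fun i hi =>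
      not_le.mpr (htj.trans_le (hmin i (mem_of_mem_erase hi)))
    rw [hempty, Finset.card_empty, Ioc_eq_empty (not_lt.mpr htj.le), Measure.restrict_empty,
      integral_zero_measure, Nat.cast_zero]
    linarith [one_sub_le_setIntegral_of_mem hj hwork]
  · have hcard : #{i ∈ J | τ i ≤ t} = #{i ∈ J.erase j | τ i ≤ t} + 1 := by
      rw [filter_erase, card_erase_add_one (mem_filter.mpr ⟨hj, hjt⟩)]
    have := hwork t
    rw [hcard, ← setIntegral_Ioc_add_setIntegral_Ioc hσi haj hjt] at this
    push_cast at this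
    linarith

/-- Induction on the number of jobs: until the first completion `τ j` all `n` jobs are alive,
so AM–GM with `k = n` on `(a, τ j]` pays for the work `W` done there; the other jobs satisfy
the same hypothesis from `τ j` on, with `c + W - 1` in place of `c`. -/
theorem ofReal_le_lintegral_sq_add_flow (hσ : ∀ t, 0 ≤ σ t) (hσi : Integrable σ) (n : ℕ) :
    ∀ (J : Finset ι), #J = n → ∀ a c : ℝ, (∀ j ∈ J, a ≤ τ j) →
      (∀ t, (#{j ∈ J | τ j ≤ t} : ℝ) - c ≤ ∫ x in Ioc a t, σ x) →
      ENNReal.ofReal (2 * ((1 - c) * √n + ∑ k ∈ range n, √k)) ≤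
        (∫⁻ t in Ioi a, ENNReal.ofReal (σ t ^ 2)) + ENNReal.ofReal (∑ j ∈ J, (τ j - a)) := by
  induction n with
  | zero =>
    intro J hJ a c _ _
    simp [card_eq_zero.mp hJ]
  | succ m ih =>
    intro J hJ a c hτ hwork
    obtain ⟨j, hj, hmin⟩ := J.exists_min_image τ (card_pos.mp (by omega))
    set W := ∫ x in Ioc a (τ j), σ x
    have haj : a ≤ τ j := hτ j hj
    have hW : 1 - c ≤ W := one_sub_le_setIntegral_of_mem hj hwork
    have hrest := ih (J.erase j) (by rw [card_erase_of_mem hj, hJ]; rfl) (τ j) (c + W - 1)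
      (fun i hi => hmin i (mem_of_mem_erase hi))
      (card_completed_erase_sub_le hσi hj hmin haj hwork)
    have hlocal := ofReal_two_mul_sqrt_mul_integral_le hσ (Nat.cast_nonneg (m + 1)) a (τ j)
    have hflow : ENNReal.ofReal (∑ i ∈ J, (τ i - a)) =
        ENNReal.ofReal ((m + 1 : ℕ) * (τ j - a)) +
          ENNReal.ofReal (∑ i ∈ J.erase j, (τ i - τ j)) := by
      rw [← ENNReal.ofReal_add (mul_nonneg (Nat.cast_nonneg _) (sub_nonneg.mpr haj))
        (sum_nonneg fun i hi => sub_nonneg.mpr (hmin i (mem_of_mem_erase hi))),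
        sum_sub_eq_card_mul_add_sum_erase hj, hJ]
    have hreal : 2 * ((1 - c) * √(m + 1 : ℕ) + ∑ k ∈ range (m + 1), √k) ≤
        2 * √(m + 1 : ℕ) * W + 2 * ((1 - (c + W - 1)) * √m + ∑ k ∈ range m, √k) := by
      have hsqrt : √(m : ℝ) ≤ √(m + 1 : ℕ) := Real.sqrt_le_sqrt (by push_cast; linarith)
      rw [sum_range_succ]
      nlinarith [mul_nonneg (sub_nonneg.mpr hW) (sub_nonneg.mpr hsqrt)]
    calc ENNReal.ofReal (2 * ((1 - c) * √(m + 1 : ℕ) + ∑ k ∈ range (m + 1), √k))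
        ≤ ENNReal.ofReal (2 * √(m + 1 : ℕ) * W) +
            ENNReal.ofReal (2 * ((1 - (c + W - 1)) * √m + ∑ k ∈ range m, √k)) :=
          (ENNReal.ofReal_le_ofReal hreal).trans ENNReal.ofReal_add_le
      _ ≤ _ := add_le_add hlocal hrest
      _ = _ := by rw [lintegral_Ioi_eq_lintegral_Ioc_add haj, hflow]; ring

end CompletionTimes

section Feasible

variable {J : Finset Job} {S : Sched} {j : Job}

lemma Feasible.integrable (hS : Feasible J S) (hj : j ∈ J) (hp : j.p ≠ 0) :
    Integrable (S j) := by
  obtain ⟨-, -, hzero, hwork⟩ := hS j hj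
  have hIci : IntegrableOn (S j) (Ici j.r) := by
    by_contra h
    exact hp (by rw [← hwork, integral_undef h])
  have hIio : IntegrableOn (S j) (Iio j.r) :=
    integrableOn_zero.congr_fun (fun t ht => (hzero t ht).symm) measurableSet_Iio
  rw [← integrableOn_univ, ← Iio_union_Ici]
  exact hIio.union hIci

lemma Feasible.continuous_work (hS : Feasible J S) (hj : j ∈ J) (hp : j.p ≠ 0) :
    Continuous (work S j) := by
  have hprimitive : work S j = fun t => j.p - ∫ u in j.r..max j.r t, S j u := by
    funext t
    rw [work, integral_Icc_eq_integral_Ioc]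
    rcases le_total j.r t with h | h
    · rw [max_eq_right h, intervalIntegral.integral_of_le h]
    · rw [max_eq_left h, intervalIntegral.integral_same, Ioc_eq_empty (not_lt.mpr h),
        Measure.restrict_empty, integral_zero_measure]
  rw [hprimitive]
  exact continuous_const.sub <| (intervalIntegral.continuous_primitive
    (fun _ _ => (hS.integrable hj hp).intervalIntegrable) j.r).comp
      (continuous_const.max continuous_id)

lemma ctime_le_of_work_eq_zero {t : ℝ} (hrt : j.r ≤ t) (ht : work S j t = 0) :
    ctime S j ≤ ENNReal.ofReal t :=
  iInf₂_le t ⟨hrt, ht⟩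

/-- The infimum defining the completion time is attained, because the work profile is
continuous. -/
lemma Feasible.work_ctime_toReal (hS : Feasible J S) (hj : j ∈ J) (hp : j.p ≠ 0)
    (hr : 0 ≤ j.r) (hc : ctime S j ≠ ⊤) :
    j.r ≤ (ctime S j).toReal ∧ work S j (ctime S j).toReal = 0 := by
  set Z := {t | j.r ≤ t ∧ work S j t = 0}
  have hZ : Z.Nonempty := by
    by_contra hZ
    exact hc (iInf₂_eq_top.mpr fun t ht => absurd ⟨t, ht⟩ hZ)
  have hclosed : IsClosed Z :=
    isClosed_le continuous_const continuous_id |>.inter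
      (isClosed_eq (hS.continuous_work hj hp) continuous_const)
  have hbdd : BddBelow Z := ⟨j.r, fun t ht => ht.1⟩
  have hmem : sInf Z ∈ Z := hclosed.csInf_mem hZ hbdd
  have hct : ctime S j = ENNReal.ofReal (sInf Z) :=
    le_antisymm (ctime_le_of_work_eq_zero hmem.1 hmem.2)
      (le_iInf₂ fun t ht => ENNReal.ofReal_le_ofReal (csInf_le hbdd ht))
  rw [hct, ENNReal.toReal_ofReal (hr.trans hmem.1)]
  exact hmem

lemma flowTime_eq_ofReal_sum (hr : ∀ j ∈ J, 0 ≤ j.r)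
    (hc : ∀ j ∈ J, ctime S j ≠ ⊤) (hrc : ∀ j ∈ J, j.r ≤ (ctime S j).toReal) :
    flowTime S J = ENNReal.ofReal (∑ j ∈ J, ((ctime S j).toReal - j.r)) := by
  rw [flowTime, ENNReal.ofReal_sum_of_nonneg fun j hj => sub_nonneg.mpr (hrc j hj)]
  refine sum_congr rfl fun j hj => ?_
  rw [ENNReal.ofReal_sub _ (hr j hj), ENNReal.ofReal_toReal (hc j hj)]

lemma ctime_ne_top_of_cost_ne_top (hfin : cost S J ≠ ⊤) :
    ∀ j ∈ J, ctime S j ≠ ⊤ := by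
  intro j hj hj_top
  refine hfin (ENNReal.add_eq_top.mpr (Or.inr (ENNReal.sum_eq_top.mpr ⟨j, hj, ?_⟩)))
  rw [hj_top, ENNReal.top_sub ENNReal.ofReal_ne_top]

lemma card_completed_le_integral (hS : Feasible J S)
    (hp : ∀ j ∈ J, j.p = 1) (hr : ∀ j ∈ J, 0 ≤ j.r) {τ : Job → ℝ}
    (hτ : ∀ j ∈ J, j.r ≤ τ j ∧ work S j (τ j) = 0) (a t : ℝ) :
    (#{j ∈ J | τ j ≤ t} : ℝ) ≤
      (∫ x in Icc 0 a, ∑ j ∈ J, S j x) + ∫ x in Ioc a t, ∑ j ∈ J, S j x := by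
  have hint : ∀ j ∈ J, Integrable (S j) := fun j hj =>
    hS.integrable hj (by rw [hp j hj]; exact one_ne_zero)
  have hone : ∀ j ∈ {j ∈ J | τ j ≤ t}, 1 ≤ ∫ x in Icc 0 a ∪ Ioc a t, S j x := by
    intro j hj
    obtain ⟨hjJ, hjt⟩ := mem_filter.mp hj
    have hwork := (hτ j hjJ).2
    have hsub : Icc j.r (τ j) ⊆ Icc 0 a ∪ Ioc a t := fun x hx => by
      rcases le_or_gt x a with hxa | hxa
      · exact Or.inl ⟨(hr j hjJ).trans hx.1, hxa⟩
      · exact Or.inr ⟨hxa, hx.2.trans hjt⟩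
    calc (1 : ℝ) = ∫ x in Icc j.r (τ j), S j x := by
          rw [work, hp j hjJ] at hwork
          linarith
      _ ≤ ∫ x in Icc 0 a ∪ Ioc a t, S j x :=
          setIntegral_mono_set (hint j hjJ).integrableOn
            (ae_of_all _ (hS j hjJ).2.1) (ae_of_all _ hsub)
  calc (#{j ∈ J | τ j ≤ t} : ℝ) = ∑ j ∈ {j ∈ J | τ j ≤ t}, 1 := by simp
    _ ≤ ∑ j ∈ {j ∈ J | τ j ≤ t}, ∫ x in Icc 0 a ∪ Ioc a t, S j x := sum_le_sum hone
    _ ≤ ∑ j ∈ J, ∫ x in Icc 0 a ∪ Ioc a t, S j x :=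
        sum_le_sum_of_subset_of_nonneg (filter_subset _ _) fun j hj _ =>
          integral_nonneg fun x => (hS j hj).2.1 x
    _ = ∫ x in Icc 0 a ∪ Ioc a t, ∑ j ∈ J, S j x :=
        (integral_finsetSum _ fun j hj => (hint j hj).integrableOn).symm
    _ = _ := setIntegral_union (disjoint_left.mpr fun x h₁ h₂ => h₂.1.not_ge h₁.2)
        measurableSet_Ioc (integrable_finsetSum J hint).integrableOn
        (integrable_finsetSum J hint).integrableOn

end Feasible

lemma ofReal_add_one_div_le_cost_singleton {j : Job} (hr : j.r = 0) (hp : j.p = 1) {S : Sched}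
    (hS : Feasible {j} S) {e : ℝ} (he : 0 < e) (he1 : e ≤ 1) (hdone : work S j e = 0) :
    ENNReal.ofReal (e + 1 / e) ≤ cost S {j} := by
  have hct : ctime S j ≤ ENNReal.ofReal e := ctime_le_of_work_eq_zero (hr ▸ he.le) hdone
  have hfin : ctime S j ≠ ⊤ := ne_top_of_le_ne_top ENNReal.ofReal_ne_top hct
  obtain ⟨hrc, hwc⟩ :=
    hS.work_ctime_toReal (mem_singleton_self j) (by rw [hp]; exact one_ne_zero) hr.ge hfin
  set c := (ctime S j).toReal
  have hce : c ≤ e := ENNReal.toReal_le_of_le_ofReal he.le hct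
  have hwork : ∫ t in Ioc 0 c, S j t = 1 := by
    rw [work, hr, hp, integral_Icc_eq_integral_Ioc] at hwc
    linarith
  have hc : 0 < c := by
    refine (hr ▸ hrc).lt_of_ne fun h => ?_
    rw [← h, Set.Ioc_self, Measure.restrict_empty, integral_zero_measure] at hwork
    exact zero_ne_one hwork
  have henergy : ENNReal.ofReal (1 / c) ≤ energy {j} S := by
    calc ENNReal.ofReal (1 / c) = ENNReal.ofReal (1 ^ 2 / (c - 0)) := by norm_num
      _ ≤ ∫⁻ t in Ioc 0 c, ENNReal.ofReal (S j t ^ 2) :=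
          ofReal_sq_div_le_lintegral_sq (hS j (mem_singleton_self j)).2.1 zero_le_one hwork.ge
      _ ≤ energy {j} S := by
          simp only [energy, sum_singleton]
          exact lintegral_mono_set Ioc_subset_Ioi_self
  have hflow : flowTime S {j} = ENNReal.ofReal c := by
    rw [flowTime_eq_ofReal_sum (by simp [hr]) (by simpa using hfin) (by simpa using hrc)]
    simp [hr, c]
  calc ENNReal.ofReal (e + 1 / e) ≤ ENNReal.ofReal (c + 1 / c) :=
        ENNReal.ofReal_le_ofReal (antitoneOn_add_one_div ⟨hc, hce.trans he1⟩ ⟨he, he1⟩ hce)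
    _ = ENNReal.ofReal (1 / c) + ENNReal.ofReal c := by
        rw [add_comm, ENNReal.ofReal_add (by positivity) hc.le]
    _ ≤ cost S {j} := add_le_add henergy hflow.ge

noncomputable def sequentialSchedule (rk : Job → ℕ) (T s : ℕ → ℝ) : Sched :=
  fun j => (Ioc (T (rk j)) (T (rk j + 1))).indicator fun _ => s (rk j)

section SequentialSchedule

variable {J : Finset Job} {rk : Job → ℕ} {T s : ℕ → ℝ}

lemma setIntegral_sequentialSchedule (hT : Monotone T) {j : Job} {A : Set ℝ}
    (hsub : Ioc (T (rk j)) (T (rk j + 1)) ⊆ A) :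
    ∫ t in A, sequentialSchedule rk T s j t = s (rk j) * (T (rk j + 1) - T (rk j)) := by
  rw [sequentialSchedule, setIntegral_indicator measurableSet_Ioc, setIntegral_const,
    inter_eq_self_of_subset_right hsub, Real.volume_real_Ioc_of_le (hT (Nat.le_succ _)),
    smul_eq_mul, mul_comm]

lemma feasible_sequentialSchedule (hT : Monotone T) (hs : ∀ k, 0 ≤ s k)
    (hrel : ∀ j ∈ J, j.r ≤ T (rk j))
    (hp : ∀ j ∈ J, s (rk j) * (T (rk j + 1) - T (rk j)) = j.p) :
    Feasible J (sequentialSchedule rk T s) := fun j hj =>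
  ⟨measurable_const.indicator measurableSet_Ioc, indicator_nonneg fun _ _ => hs _,
    fun _ ht => indicator_of_notMem (fun h => (ht.trans_le (hrel j hj)).not_gt h.1) _,
    (setIntegral_sequentialSchedule hT
      fun _ hx => (hrel j hj).trans hx.1.le).trans (hp j hj)⟩

lemma energy_sequentialSchedule_le (hT : Monotone T) (hrk : Set.InjOn rk J) :
    energy J (sequentialSchedule rk T s) ≤
      ∑ j ∈ J, ENNReal.ofReal (s (rk j) ^ 2 * (T (rk j + 1) - T (rk j))) := by
  set S := sequentialSchedule rk T s
  have hdisj : ∀ t, ∀ i ∈ J, ∀ j ∈ J, i ≠ j → S i t * S j t = 0 := by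
    intro t i hi j hj hij
    by_contra h
    obtain ⟨hi', hj'⟩ := mul_ne_zero_iff.mp h
    have := hT.pairwise_disjoint_on_Ioc_succ fun h => hij (hrk hi hj h)
    exact disjoint_left.mp this (mem_of_indicator_ne_zero hi') (mem_of_indicator_ne_zero hj')
  have hsq : ∀ j t, ENNReal.ofReal (S j t ^ 2) =
      (Ioc (T (rk j)) (T (rk j + 1))).indicator (fun _ => ENNReal.ofReal (s (rk j) ^ 2)) t := by
    intro j t
    by_cases ht : t ∈ Ioc (T (rk j)) (T (rk j + 1)) <;> simp [S, sequentialSchedule, ht]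
  calc energy J S ≤ ∫⁻ t, ∑ j ∈ J, ENNReal.ofReal (S j t ^ 2) := by
        refine setLIntegral_le_lintegral _ _ |>.trans (lintegral_mono fun t => ?_)
        rw [sq_sum_eq_sum_sq_of_mul_eq_zero (hdisj t),
          ENNReal.ofReal_sum_of_nonneg fun j _ => sq_nonneg _]
    _ = ∑ j ∈ J, ENNReal.ofReal (s (rk j) ^ 2 * (T (rk j + 1) - T (rk j))) := by
        simp_rw [hsq]
        rw [lintegral_finsetSum _ fun j _ => measurable_const.indicator measurableSet_Ioc]
        refine sum_congr rfl fun j _ => ?_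
        rw [lintegral_indicator_const measurableSet_Ioc, Real.volume_Ioc,
          ← ENNReal.ofReal_mul (sq_nonneg _)]

lemma flowTime_sequentialSchedule_le (hT : Monotone T) (hr : ∀ j ∈ J, 0 ≤ j.r)
    (hrel : ∀ j ∈ J, j.r ≤ T (rk j)) (hp : ∀ j ∈ J, s (rk j) * (T (rk j + 1) - T (rk j)) = j.p) :
    flowTime (sequentialSchedule rk T s) J ≤ ∑ j ∈ J, ENNReal.ofReal (T (rk j + 1) - j.r) := by
  refine sum_le_sum fun j hj => ?_
  have hdone : work (sequentialSchedule rk T s) j (T (rk j + 1)) = 0 := by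
    rw [work, setIntegral_sequentialSchedule (A := Icc j.r (T (rk j + 1))) hT
      fun _ hx => ⟨(hrel j hj).trans hx.1.le, hx.2⟩, hp j hj, sub_self]
  rw [ENNReal.ofReal_sub _ (hr j hj)]
  exact tsub_le_tsub_right (ctime_le_of_work_eq_zero
    ((hrel j hj).trans (hT (Nat.le_succ _))) hdone) _

lemma OPT_le_sequentialSchedule (hT : Monotone T) (hs : ∀ k, 0 ≤ s k) (hrk : Set.InjOn rk J)
    (hr : ∀ j ∈ J, 0 ≤ j.r) (hrel : ∀ j ∈ J, j.r ≤ T (rk j))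
    (hp : ∀ j ∈ J, s (rk j) * (T (rk j + 1) - T (rk j)) = j.p) :
    OPT J ≤ ENNReal.ofReal (∑ j ∈ J, s (rk j) ^ 2 * (T (rk j + 1) - T (rk j))) +
      ENNReal.ofReal (∑ j ∈ J, (T (rk j + 1) - j.r)) := by
  rw [ENNReal.ofReal_sum_of_nonneg fun j _ =>
      mul_nonneg (sq_nonneg _) (sub_nonneg.mpr (hT (Nat.le_succ _))),
    ENNReal.ofReal_sum_of_nonneg fun j hj =>
      sub_nonneg.mpr ((hrel j hj).trans (hT (Nat.le_succ _)))]
  exact (iInf₂_le _ (feasible_sequentialSchedule hT hs hrel hp)).trans <|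
    add_le_add (energy_sequentialSchedule_le hT hrk) (flowTime_sequentialSchedule_le hT hr hrel hp)

end SequentialSchedule

/-- `J` is the instance `Ĵ_n`, and `j₀` its job released at time `0`. -/
structure IsDelayedBatch (n : ℕ) (J : Finset Job) (j₀ : Job) : Prop where
  card_eq : #J = n
  mem : j₀ ∈ J
  release_first : j₀.r = 0
  unit : ∀ j ∈ J, j.p = 1
  release_rest : ∀ j ∈ J, j ≠ j₀ → j.r = 1 / √n

namespace IsDelayedBatch

variable {n : ℕ} {J : Finset Job} {j₀ : Job}

lemma one_le (hJ : IsDelayedBatch n J j₀) : 1 ≤ n :=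
  hJ.card_eq ▸ card_pos.mpr ⟨j₀, hJ.mem⟩

lemma sqrt_pos (hJ : IsDelayedBatch n J j₀) : 0 < √(n : ℝ) :=
  Real.sqrt_pos.mpr (by exact_mod_cast hJ.one_le)

lemma release_nonneg (hJ : IsDelayedBatch n J j₀) : ∀ j ∈ J, 0 ≤ j.r := by
  intro j hj
  by_cases hj₀ : j = j₀
  · rw [hj₀, hJ.release_first]
  · rw [hJ.release_rest j hj hj₀]
    exact (one_div_pos.mpr hJ.sqrt_pos).le

lemma release_le (hJ : IsDelayedBatch n J j₀) : ∀ j ∈ J, j.r ≤ 1 / √n := by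
  intro j hj
  by_cases hj₀ : j = j₀
  · rw [hj₀, hJ.release_first]
    exact (one_div_pos.mpr hJ.sqrt_pos).le
  · rw [hJ.release_rest j hj hj₀]

lemma sum_release (hJ : IsDelayedBatch n J j₀) : ∑ j ∈ J, j.r = (n - 1) * (1 / √n) := by
  rw [← add_sum_erase J _ hJ.mem, hJ.release_first, zero_add,
    sum_congr rfl fun j hj => hJ.release_rest j (mem_of_mem_erase hj) (ne_of_mem_erase hj),
    sum_const, card_erase_of_mem hJ.mem, hJ.card_eq, nsmul_eq_mul, Nat.cast_sub hJ.one_le,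
    Nat.cast_one]

lemma sum_release_eq_sqrt_sub (hJ : IsDelayedBatch n J j₀) : ∑ j ∈ J, j.r = √n - 1 / √n := by
  rw [hJ.sum_release]
  field_simp [hJ.sqrt_pos.ne']
  rw [Real.sq_sqrt (Nat.cast_nonneg n)]

lemma release_le_of_rank (hJ : IsDelayedBatch n J j₀) {rk : Job → ℕ} (hrk : Set.InjOn rk J)
    (hrk₀ : rk j₀ = 0) {T : ℕ → ℝ} (hT : Monotone T) (hT₀ : T 0 = 0) (hT₁ : T 1 = 1 / √n) :
    ∀ j ∈ J, j.r ≤ T (rk j) := by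
  intro j hj
  by_cases hj₀ : j = j₀
  · rw [hj₀, hJ.release_first, hrk₀, hT₀]
  · have h1 : 1 ≤ rk j :=
      Nat.one_le_iff_ne_zero.mpr fun h => hj₀ (hrk hj hJ.mem (h.trans hrk₀.symm))
    rw [hJ.release_rest j hj hj₀, ← hT₁]
    exact hT h1

lemma setIntegral_sum_eq (hJ : IsDelayedBatch n J j₀) {S : Sched} (hS : Feasible J S) :
    ∫ t in Icc 0 (1 / √n), ∑ j ∈ J, S j t = ∫ t in Icc 0 (1 / √n), S j₀ t := by
  have hint : ∀ j ∈ J, Integrable (S j) := fun j hj =>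
    hS.integrable hj (by rw [hJ.unit j hj]; exact one_ne_zero)
  rw [integral_finsetSum _ fun j hj => (hint j hj).integrableOn]
  refine sum_eq_single_of_mem j₀ hJ.mem fun j hj hj₀ => ?_
  rw [integral_Icc_eq_integral_Ico]
  exact setIntegral_eq_zero_of_forall_eq_zero fun t ht =>
    (hS j hj).2.2.1 t (hJ.release_rest j hj hj₀ ▸ ht.2)

lemma flowTime_eq (hJ : IsDelayedBatch n J j₀) {S : Sched} (hct : ∀ j ∈ J, ctime S j ≠ ⊤)
    (hτ : ∀ j ∈ J, 1 / √n ≤ (ctime S j).toReal) :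
    flowTime S J =
      ENNReal.ofReal (1 / √n) + ENNReal.ofReal (∑ j ∈ J, ((ctime S j).toReal - 1 / √n)) := by
  rw [flowTime_eq_ofReal_sum hJ.release_nonneg hct fun j hj => (hJ.release_le j hj).trans (hτ j hj),
    ← ENNReal.ofReal_add (one_div_pos.mpr hJ.sqrt_pos).le
      (sum_nonneg fun j hj => sub_nonneg.mpr (hτ j hj))]
  congr 1
  simp only [sum_sub_distrib, sum_const, hJ.card_eq, nsmul_eq_mul, hJ.sum_release]
  ring

lemma ofReal_le_cost (hJ : IsDelayedBatch n J j₀) {S : Sched} (hS : Feasible J S)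
    (hfin : cost S J ≠ ⊤) {w : ℝ} (hw : ∫ t in Icc 0 (1 / √n), S j₀ t = w) (hw1 : w < 1) :
    ENNReal.ofReal (w ^ 2 * √n + 1 / √n + 2 * ((1 - w) * √n + ∑ k ∈ range n, √k)) ≤
      cost S J := by
  set ε := 1 / √(n : ℝ) with hε_def
  have hε : 0 < ε := one_div_pos.mpr hJ.sqrt_pos
  have hp : ∀ j ∈ J, j.p ≠ 0 := fun j hj => by rw [hJ.unit j hj]; exact one_ne_zero
  have hσ : ∀ t, 0 ≤ ∑ j ∈ J, S j t := fun t => sum_nonneg fun j hj => (hS j hj).2.1 t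
  have hσi : Integrable fun t => ∑ j ∈ J, S j t :=
    integrable_finsetSum J fun j hj => hS.integrable hj (hp j hj)
  have hct := ctime_ne_top_of_cost_ne_top hfin
  set τ := fun j => (ctime S j).toReal
  have hτ : ∀ j ∈ J, j.r ≤ τ j ∧ work S j (τ j) = 0 := fun j hj =>
    hS.work_ctime_toReal hj (hp j hj) (hJ.release_nonneg j hj) (hct j hj)
  have hwork : ∀ t, (#{j ∈ J | τ j ≤ t} : ℝ) - w ≤ ∫ x in Ioc ε t, ∑ j ∈ J, S j x := by
    intro t
    have := card_completed_le_integral hS hJ.unit hJ.release_nonneg hτ ε t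
    rw [hJ.setIntegral_sum_eq hS, hw] at this
    linarith
  have hτε : ∀ j ∈ J, ε ≤ τ j := fun j hj => by
    by_contra! h
    have := one_sub_le_setIntegral_of_mem hj hwork
    rw [Ioc_eq_empty (not_lt.mpr h.le), Measure.restrict_empty, integral_zero_measure] at this
    linarith
  have hafter := ofReal_le_lintegral_sq_add_flow (τ := τ) hσ hσi n J hJ.card_eq ε w hτε hwork
  have hbefore : ENNReal.ofReal (w ^ 2 * √n) ≤
      ∫⁻ t in Ioc 0 ε, ENNReal.ofReal ((∑ j ∈ J, S j t) ^ 2) := by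
    have hw' : ∫ t in Ioc 0 ε, ∑ j ∈ J, S j t = w := by
      rw [← integral_Icc_eq_integral_Ioc, hJ.setIntegral_sum_eq hS, hw]
    have hw0 : 0 ≤ w := hw ▸ integral_nonneg fun t => (hS j₀ hJ.mem).2.1 t
    convert ofReal_sq_div_le_lintegral_sq hσ hw0 hw'.ge using 2
    rw [sub_zero, hε_def, div_div_eq_mul_div, div_one]
  calc ENNReal.ofReal (w ^ 2 * √n + ε + 2 * ((1 - w) * √n + ∑ k ∈ range n, √k))
      ≤ ENNReal.ofReal (w ^ 2 * √n) + ENNReal.ofReal ε +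
          ENNReal.ofReal (2 * ((1 - w) * √n + ∑ k ∈ range n, √k)) :=
        ENNReal.ofReal_add_le.trans (add_le_add_left ENNReal.ofReal_add_le _)
    _ ≤ (∫⁻ t in Ioc 0 ε, ENNReal.ofReal ((∑ j ∈ J, S j t) ^ 2)) + ENNReal.ofReal ε +
          ((∫⁻ t in Ioi ε, ENNReal.ofReal ((∑ j ∈ J, S j t) ^ 2)) +
            ENNReal.ofReal (∑ j ∈ J, (τ j - ε))) := by gcongr
    _ = cost S J := by
        rw [cost, energy, lintegral_Ioi_eq_lintegral_Ioc_add hε.le, hJ.flowTime_eq hct hτε]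
        ring

/-- Witness: the jobs run one after the other, `j₀` first, at speed
`√(number of unfinished jobs)`. -/
lemma OPT_le (hJ : IsDelayedBatch n J j₀) :
    OPT J ≤ ENNReal.ofReal (√n + 1 / √n + 2 * ∑ k ∈ range n, √k) := by
  obtain ⟨rk, hrk, hlt, hrk₀⟩ := J.exists_rank hJ.mem
  have hreindex := J.sum_comp_eq_sum_range (M := ℝ) hrk hlt
  rw [hJ.card_eq] at hlt hreindex
  set T : ℕ → ℝ := fun k => ∑ m ∈ range k, 1 / √((n : ℝ) - m)
  set s : ℕ → ℝ := fun k => √((n : ℝ) - k)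
  have hΔ : ∀ k, T (k + 1) - T k = 1 / √((n : ℝ) - k) := fun k => by
    simp only [T, sum_range_succ, add_sub_cancel_left]
  have hT : Monotone T := monotone_nat_of_le_succ fun k => sub_nonneg.mp (by rw [hΔ]; positivity)
  have hp : ∀ j ∈ J, s (rk j) * (T (rk j + 1) - T (rk j)) = j.p := by
    intro j hj
    have hpos : 0 < (n : ℝ) - rk j := sub_pos.mpr (by exact_mod_cast hlt j hj)
    rw [hΔ, hJ.unit j hj, mul_one_div_cancel (Real.sqrt_pos.mpr hpos).ne']
  have hrel := hJ.release_le_of_rank hrk hrk₀ hT (by simp [T]) (by simp [T])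
  have henergy : ∑ j ∈ J, s (rk j) ^ 2 * (T (rk j + 1) - T (rk j)) =
      √n + ∑ k ∈ range n, √(k : ℝ) := by
    rw [hreindex fun k => s k ^ 2 * (T (k + 1) - T k), ← sum_range_sqrt_sub]
    refine sum_congr rfl fun k hk => ?_
    have hpos : 0 ≤ (n : ℝ) - k := sub_nonneg.mpr (by exact_mod_cast (mem_range.mp hk).le)
    rw [hΔ, Real.sq_sqrt hpos, ← div_eq_mul_one_div, Real.div_sqrt]
  have hcompletion : ∑ j ∈ J, T (rk j + 1) = √n + ∑ k ∈ range n, √(k : ℝ) := by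
    rw [hreindex fun k => T (k + 1), ← sum_range_sqrt_sub]
    simp only [T]
    rw [sum_range_sum_range_succ]
    exact sum_congr rfl fun k _ => by rw [← div_eq_mul_one_div, Real.div_sqrt]
  refine (OPT_le_sequentialSchedule (s := s) hT (fun k => Real.sqrt_nonneg _) hrk
    hJ.release_nonneg hrel hp).trans_eq ?_
  rw [← ENNReal.ofReal_add (by rw [henergy]; positivity) (sum_nonneg fun j hj =>
      sub_nonneg.mpr ((hrel j hj).trans (hT (Nat.le_succ _)))),
    sum_sub_distrib, henergy, hcompletion, hJ.sum_release_eq_sqrt_sub]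
  congr 1
  ring

lemma setIntegral_eq_one_of_cost_eq_OPT (hJ : IsDelayedBatch n J j₀) {S : Sched}
    (hS : Feasible J S) (hopt : cost S J = OPT J) : ∫ t in Icc 0 (1 / √n), S j₀ t = 1 := by
  obtain ⟨-, hnn, -, hwork⟩ := hS j₀ hJ.mem
  rw [hJ.release_first, hJ.unit j₀ hJ.mem] at hwork
  have hint := hS.integrable hJ.mem (by rw [hJ.unit j₀ hJ.mem]; exact one_ne_zero)
  refine le_antisymm (hwork ▸ setIntegral_mono_set hint.integrableOn (ae_of_all _ hnn)
    (ae_of_all _ Icc_subset_Ici_self)) (not_lt.mp fun hlt => ?_)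
  have hup := hJ.OPT_le
  have hlow := hJ.ofReal_le_cost hS (hopt ▸ ne_top_of_le_ne_top ENNReal.ofReal_ne_top hup) rfl hlt
  rw [hopt] at hlow
  have := (ENNReal.ofReal_le_ofReal_iff (by positivity)).mp (hlow.trans hup)
  nlinarith [mul_pos (pow_pos (sub_pos.mpr hlt) 2) hJ.sqrt_pos]

end IsDelayedBatch

lemma setIntegral_Icc_eq_of_nonAnticipatory {A : AlgP} (hna : NonAnticipatory A)
    (Jhat : Finset Job) {J : Finset Job} {j₀ : Job} (hmem : j₀ ∈ J) (hr₀ : j₀.r = 0) {ε : ℝ}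
    (hr : ∀ j ∈ J, j ≠ j₀ → ε ≤ j.r) :
    ∫ t in Icc 0 ε, A Jhat J j₀ t = ∫ t in Icc 0 ε, A Jhat {j₀} j₀ t := by
  rw [integral_Icc_eq_integral_Ico, integral_Icc_eq_integral_Ico]
  refine setIntegral_congr_fun measurableSet_Ico fun u hu => ?_
  have hrestrict : restrictLE J u = restrictLE {j₀} u := by
    ext j
    simp only [restrictLE, mem_filter, Finset.mem_singleton]
    constructor
    · rintro ⟨hj, hju⟩
      exact ⟨by_contra fun hne => ((hr j hj hne).trans hju).not_gt hu.2, hju⟩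
    · rintro ⟨rfl, hju⟩
      exact ⟨hmem, hju⟩
  exact hna Jhat J {j₀} u hrestrict j₀ (mem_filter.mpr ⟨hmem, hr₀ ▸ hu.1⟩) u le_rfl

theorem no_one_consistent_algorithm_is_robust_general (n : ℕ)
    (Jhat : Finset Job) (hcard : Jhat.card = n)
    (j₀ : Job) (hmem : j₀ ∈ Jhat) (hr₀ : j₀.r = 0)
    (hp : ∀ j ∈ Jhat, j.p = 1)
    (hr : ∀ j ∈ Jhat, j ≠ j₀ → j.r = 1 / Real.sqrt n)
    (A : AlgP) (hfeas : AlgFeasible A) (hna : NonAnticipatory A)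
    (hconsistent : cost (A Jhat Jhat) Jhat = OPT Jhat) :
    ENNReal.ofReal ((Real.sqrt n + 1 / Real.sqrt n) / 2) * OPT {j₀} ≤
      cost (A Jhat {j₀}) {j₀} := by
  have hJ : IsDelayedBatch n Jhat j₀ := ⟨hcard, hmem, hr₀, hp, hr⟩
  have hsingle : IsDelayedBatch 1 {j₀} j₀ :=
    ⟨Finset.card_singleton j₀, mem_singleton_self j₀, hr₀, by simpa using hp j₀ hmem, by simp⟩
  have hε : 0 < 1 / √(n : ℝ) := one_div_pos.mpr hJ.sqrt_pos
  have hε1 : 1 / √(n : ℝ) ≤ 1 :=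
    div_le_one_of_le₀ (Real.one_le_sqrt.mpr (by exact_mod_cast hJ.one_le)) (Real.sqrt_nonneg _)
  have hdone : work (A Jhat {j₀}) j₀ (1 / √n) = 0 := by
    rw [work, hr₀, hp j₀ hmem, ← setIntegral_Icc_eq_of_nonAnticipatory hna Jhat hmem hr₀
      fun j hj hne => (hr j hj hne).ge,
      hJ.setIntegral_eq_one_of_cost_eq_OPT (hfeas Jhat Jhat) hconsistent, sub_self]
  have hopt : OPT {j₀} ≤ 2 := by simpa [one_add_one_eq_two] using hsingle.OPT_le
  calc ENNReal.ofReal ((√n + 1 / √n) / 2) * OPT {j₀} ≤ ENNReal.ofReal ((√n + 1 / √n) / 2) * 2 := by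
        gcongr
    _ = ENNReal.ofReal (1 / √n + 1 / (1 / √n)) := by
        rw [← ENNReal.ofReal_ofNat 2, ← ENNReal.ofReal_mul (by positivity), one_div_one_div]
        congr 1
        ring
    _ ≤ cost (A Jhat {j₀}) {j₀} :=
        ofReal_add_one_div_le_cost_singleton hr₀ (hp j₀ hmem) (hfeas Jhat {j₀}) hε hε1 hdone

/-- **Proposition B.1.** Let `Ĵ_n` consist of `n` unit jobs, one released at
time `0` and the other `n − 1` released at time `1/√n`, and let `𝒥' = {j₀}` be
the single unit job released at time `0`. Every non-anticipatory deterministic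
algorithm with predictions that is exactly optimal when the prediction `Ĵ_n` is
correct must pay at least `((√n + 1/√n)/2)·OPT(𝒥')` on `𝒥'`. -/
theorem no_one_consistent_algorithm_is_robust (n : ℕ) (hn : 1 ≤ n)
    (Jhat : Finset Job) (hval : ValidInstance Jhat) (hcard : Jhat.card = n)
    (j₀ : Job) (hmem : j₀ ∈ Jhat) (hr₀ : j₀.r = 0)
    (hp : ∀ j ∈ Jhat, j.p = 1)
    (hr : ∀ j ∈ Jhat, j ≠ j₀ → j.r = 1 / Real.sqrt n)
    (A : AlgP) (hfeas : AlgFeasible A) (hna : NonAnticipatory A)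
    (hconsistent : cost (A Jhat Jhat) Jhat = OPT Jhat) :
    ENNReal.ofReal ((Real.sqrt n + 1 / Real.sqrt n) / 2) * OPT {j₀} ≤
      cost (A Jhat {j₀}) {j₀} :=
  no_one_consistent_algorithm_is_robust_general n Jhat hcard j₀ hmem hr₀ hp hr A hfeas hna
    hconsistent
end

section
/- Consider the energy plus flow time objective with α = 2, and let 𝒦 be an instance of n unit-work jobs (p_j = 1) all released at the same time t ≥ 0. Then (4/3)·n^{3/2} ≤ OPT(𝒦) ≤ (4/3)·((n+1)^{3/2} − 1); in particular OPT(𝒦) = (4/3)·n^{3/2} + o(n^{3/2}). -/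
/-! STATEMENT 9 (Lemma B.3): optimal energy plus flow time cost (α = 2) of n unit jobs released simultaneously. -/

open MeasureTheory Finset
open scoped ENNReal BigOperators Classical

/-!
For `n` unit jobs released together the optimum is exactly `2 ∑_{k=1}^{n} √k`, and comparing
`√k` with `∫_{k-1}^{k} √x dx` and `∫_{k}^{k+1} √x dx` gives the two bounds.

Upper bound: run the jobs back to back, the `i`-th (from `0`) at speed `√(n - i)`. It costs energy
`√(n - i)` and lasts `1/√(n - i)`, during which `n - i` jobs are unfinished, so energy and flow time
are both `∑ √k`.

Lower bound: with `s(u)` the total speed and `m(u)` the number of unfinished jobs, the cost is at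
least `∫ s² + m ≥ ∫ 2 s √m`. Order the jobs by completion time; the `i`-th receives one unit of work
before it completes, while at least `n - i` jobs are unfinished, so `∫ s √m ≥ ∑_i √(n - i)`.
-/
namespace SimultaneousUnitJobs

open Set

lemma rpow_three_halves_eq_mul_sqrt {x : ℝ} (hx : 0 ≤ x) : x ^ ((3 : ℝ) / 2) = x * √x := by
  rw [show (3 : ℝ) / 2 = 1 + 1 / 2 by norm_num, Real.rpow_add' hx (by norm_num), Real.rpow_one,
    Real.sqrt_eq_rpow]

lemma two_thirds_mul_sub_rpow_mem_Icc {x : ℝ} (hx : 0 ≤ x) :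
    2 / 3 * ((x + 1) ^ ((3 : ℝ) / 2) - x ^ ((3 : ℝ) / 2)) ∈ Icc (√x) (√(x + 1)) := by
  rw [Set.mem_Icc, rpow_three_halves_eq_mul_sqrt hx, rpow_three_halves_eq_mul_sqrt (by linarith)]
  have ha := Real.sq_sqrt (show 0 ≤ x + 1 by linarith)
  have hb := Real.sq_sqrt hx
  have hab : √x ≤ √(x + 1) := Real.sqrt_le_sqrt (by linarith)
  have hb0 := Real.sqrt_nonneg x
  constructor <;> nlinarith [mul_nonneg hb0 (sub_nonneg.2 hab)]

lemma two_thirds_mul_rpow_le_sum_sqrt (n : ℕ) :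
    2 / 3 * (n : ℝ) ^ ((3 : ℝ) / 2) ≤ ∑ k ∈ range n, √((k : ℝ) + 1) := by
  have htel := Finset.sum_range_sub (fun k : ℕ => (k : ℝ) ^ ((3 : ℝ) / 2)) n
  calc 2 / 3 * (n : ℝ) ^ ((3 : ℝ) / 2)
      = ∑ k ∈ range n, 2 / 3 * (((k : ℝ) + 1) ^ ((3 : ℝ) / 2) - (k : ℝ) ^ ((3 : ℝ) / 2)) := by
        push_cast at htel
        rw [← Finset.mul_sum, htel, Real.zero_rpow (by norm_num), sub_zero]
    _ ≤ ∑ k ∈ range n, √((k : ℝ) + 1) :=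
        Finset.sum_le_sum fun k _ => (two_thirds_mul_sub_rpow_mem_Icc (by positivity)).2

lemma sum_sqrt_le_two_thirds_mul (n : ℕ) :
    ∑ k ∈ range n, √((k : ℝ) + 1) ≤ 2 / 3 * (((n : ℝ) + 1) ^ ((3 : ℝ) / 2) - 1) := by
  have htel := Finset.sum_range_sub (fun k : ℕ => ((k : ℝ) + 1) ^ ((3 : ℝ) / 2)) n
  calc ∑ k ∈ range n, √((k : ℝ) + 1)
      ≤ ∑ k ∈ range n,
          2 / 3 * (((k : ℝ) + 1 + 1) ^ ((3 : ℝ) / 2) - ((k : ℝ) + 1) ^ ((3 : ℝ) / 2)) :=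
        Finset.sum_le_sum fun k _ => (two_thirds_mul_sub_rpow_mem_Icc (by positivity)).1
    _ = 2 / 3 * (((n : ℝ) + 1) ^ ((3 : ℝ) / 2) - 1) := by
        push_cast at htel
        rw [← Finset.mul_sum, htel, zero_add, Real.one_rpow]

lemma sum_sqrt_sub_eq_sum_sqrt_succ (n : ℕ) :
    ∑ i ∈ range n, √((n : ℝ) - i) = ∑ k ∈ range n, √((k : ℝ) + 1) := by
  rw [← Finset.sum_range_reflect]
  refine Finset.sum_congr rfl fun i hi => ?_
  rw [Nat.cast_sub (by simp at hi; omega), Nat.cast_sub (by simp at hi; omega)]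
  ring_nf

lemma sum_range_sum_range_succ {M : Type*} [AddCommMonoid M] (g : ℕ → M) (n : ℕ) :
    ∑ i ∈ range n, ∑ l ∈ range (i + 1), g l = ∑ l ∈ range n, (n - l) • g l := by
  simpa using Finset.sum_range_diag_flip n fun l _ => g l

section Completion

variable {K : Finset Job} {S : Sched} {j : Job}

lemma integrable_of_feasible (hS : Feasible K S) (hj : j ∈ K) (hp : j.p ≠ 0) :
    Integrable (S j) := by
  obtain ⟨-, -, hzero, hint⟩ := hS j hj
  have hIci : IntegrableOn (S j) (Ici j.r) :=
    Integrable.of_integral_ne_zero (hint ▸ hp)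
  have hIio : IntegrableOn (S j) (Iio j.r) :=
    integrableOn_zero.congr_fun (fun u hu => (hzero u hu).symm) measurableSet_Iio
  simpa [Iio_union_Ici] using hIio.union hIci

lemma release_le_and_work_eq_zero_at_ctime (hS : Feasible K S) (hj : j ∈ K) (hp : j.p ≠ 0)
    (hr : 0 ≤ j.r) (hfin : ctime S j ≠ ⊤) :
    j.r ≤ (ctime S j).toReal ∧ work S j (ctime S j).toReal = 0 := by
  set Z := {u | j.r ≤ u ∧ work S j u = 0}
  have hne : Z.Nonempty := by
    by_contra hZ
    exact hfin (iInf₂_eq_top.2 fun u hu => absurd ⟨u, hu⟩ hZ)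
  have hbdd : BddBelow Z := ⟨j.r, fun u hu => hu.1⟩
  have hZ : Z = Ici j.r ∩ {u | ∫ x in j.r..u, S j x = j.p} := by
    ext u
    simp only [Z, work, Set.mem_ofPred_eq, Set.mem_inter_iff, Set.mem_Ici]
    refine and_congr_right fun hu => ?_
    rw [integral_Icc_eq_integral_Ioc, ← intervalIntegral.integral_of_le hu, sub_eq_zero, eq_comm]
  have hclosed : IsClosed Z := by
    rw [hZ]
    exact isClosed_Ici.inter (isClosed_eq (intervalIntegral.continuous_primitive
      (fun _ _ => (integrable_of_feasible hS hj hp).intervalIntegrable) _) continuous_const)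
  have hmem := hclosed.csInf_mem hne hbdd
  have hct : ctime S j = ENNReal.ofReal (sInf Z) :=
    le_antisymm (iInf₂_le _ hmem) (le_iInf₂ fun u hu => ENNReal.ofReal_le_ofReal (csInf_le hbdd hu))
  rwa [hct, ENNReal.toReal_ofReal (hr.trans hmem.1)]

lemma lintegral_Ioo_eq_of_work_eq_zero (hS : Feasible K S) (hj : j ∈ K) (hp : j.p ≠ 0) {c : ℝ}
    (hc : work S j c = 0) : ∫⁻ u in Ioo j.r c, ENNReal.ofReal (S j u) = ENNReal.ofReal j.p := by
  rw [setLIntegral_congr Ioo_ae_eq_Icc, ← ofReal_integral_eq_lintegral_ofReal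
    (integrable_of_feasible hS hj hp).integrableOn (Filter.Eventually.of_forall (hS j hj).2.1)]
  unfold work at hc
  rw [sub_eq_zero.1 hc]

end Completion

section LowerBound

variable {n : ℕ} {f : Fin n → ℝ → ℝ} {C : Fin n → ℝ} {t : ℝ}

lemma card_lt_eq_sum_indicator {M : Type*} [AddCommMonoidWithOne M] (C : Fin n → ℝ) (u : ℝ) :
    (#{i | u < C i} : M) = ∑ i, (Iio (C i)).indicator 1 u := by
  rw [Finset.card_filter, Nat.cast_sum]
  simp only [Nat.cast_ite, Nat.cast_one, Nat.cast_zero, Set.indicator_apply, Set.mem_Iio,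
    Pi.one_apply]

lemma measurable_card_lt (C : Fin n → ℝ) : Measurable fun u : ℝ => (#{i | u < C i} : ℝ) := by
  simp_rw [card_lt_eq_sum_indicator]
  exact Finset.measurable_sum _ fun i _ => measurable_one.indicator measurableSet_Iio

lemma lintegral_card_lt (C : Fin n → ℝ) (t : ℝ) :
    ∫⁻ u in Ioi t, ENNReal.ofReal (#{i | u < C i} : ℝ) = ∑ i, ENNReal.ofReal (C i - t) := by
  simp_rw [ENNReal.ofReal_natCast, card_lt_eq_sum_indicator]
  rw [lintegral_finsetSum _ fun i _ => measurable_one.indicator measurableSet_Iio]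
  refine Finset.sum_congr rfl fun i _ => ?_
  rw [lintegral_indicator_one measurableSet_Iio, Measure.restrict_apply measurableSet_Iio,
    Iio_inter_Ioi, Real.volume_Ioo]

lemma sub_le_card_lt (hC : Monotone C) {i : Fin n} {u : ℝ} (hu : u < C i) :
    (n : ℝ) - i ≤ #{i' | u < C i'} := by
  have hsub : Finset.Ici i ⊆ ({i' | u < C i'} : Finset (Fin n)) := fun i' hi' => by
    rw [Finset.mem_Ici] at hi'
    simpa using hu.trans_le (hC hi')
  have hcard := Finset.card_le_card hsub
  rw [Fin.card_Ici] at hcard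
  rw [← Nat.cast_sub i.isLt.le]
  exact_mod_cast hcard

variable (hf : ∀ i, Measurable (f i)) (hf0 : ∀ i u, 0 ≤ f i u) (hC : Monotone C)
  (hwork : ∀ i, 1 ≤ ∫⁻ u in Ioo t (C i), ENNReal.ofReal (f i u))
include hf hf0 hC hwork

lemma ofReal_sum_sqrt_le_lintegral_mul_sqrt_card :
    ENNReal.ofReal (∑ k ∈ range n, √((k : ℝ) + 1)) ≤
      ∫⁻ u in Ioi t, ENNReal.ofReal ((∑ i, f i u) * √(#{i | u < C i} : ℝ)) := by
  set m : ℝ → ℝ := fun u => #{i | u < C i}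
  have hsqrt : ∀ i, ∀ u ∈ Ioo t (C i), √((n : ℝ) - i) ≤ √(m u) := fun i u hu =>
    Real.sqrt_le_sqrt (sub_le_card_lt hC hu.2)
  calc ENNReal.ofReal (∑ k ∈ range n, √((k : ℝ) + 1))
      = ∑ i : Fin n, ENNReal.ofReal √((n : ℝ) - i) := by
        rw [← sum_sqrt_sub_eq_sum_sqrt_succ, ← Fin.sum_univ_eq_sum_range (fun i => √((n : ℝ) - i)),
          ENNReal.ofReal_sum_of_nonneg fun _ _ => Real.sqrt_nonneg _]
    _ ≤ ∑ i, ∫⁻ u in Ioo t (C i), ENNReal.ofReal (f i u * √(m u)) := by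
        gcongr with i
        calc ENNReal.ofReal √((n : ℝ) - i)
            ≤ ENNReal.ofReal √((n : ℝ) - i) * ∫⁻ u in Ioo t (C i), ENNReal.ofReal (f i u) :=
              le_mul_of_one_le_right' (hwork i)
          _ = ∫⁻ u in Ioo t (C i), ENNReal.ofReal (f i u * √((n : ℝ) - i)) := by
              rw [← lintegral_const_mul' _ _ ENNReal.ofReal_ne_top]
              simp_rw [ENNReal.ofReal_mul (hf0 i _), mul_comm]
          _ ≤ ∫⁻ u in Ioo t (C i), ENNReal.ofReal (f i u * √(m u)) :=
              setLIntegral_mono' measurableSet_Ioo fun u hu =>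
                ENNReal.ofReal_le_ofReal (mul_le_mul_of_nonneg_left (hsqrt i u hu) (hf0 i u))
    _ ≤ ∑ i, ∫⁻ u in Ioi t, ENNReal.ofReal (f i u * √(m u)) := by
        gcongr with i
        exact Set.Ioo_subset_Ioi_self
    _ = ∫⁻ u in Ioi t, ENNReal.ofReal ((∑ i, f i u) * √(m u)) := by
        have hm : Measurable m := measurable_card_lt C
        rw [← lintegral_finsetSum (f := fun i u => ENNReal.ofReal (f i u * √(m u))) _
          fun i _ => by fun_prop]
        refine lintegral_congr fun u => ?_
        rw [Finset.sum_mul, ENNReal.ofReal_sum_of_nonneg fun i _ =>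
          mul_nonneg (hf0 i u) (Real.sqrt_nonneg _)]

theorem ofReal_two_mul_sum_sqrt_le :
    ENNReal.ofReal (2 * ∑ k ∈ range n, √((k : ℝ) + 1)) ≤
      (∫⁻ u in Ioi t, ENNReal.ofReal ((∑ i, f i u) ^ 2)) + ∑ i, ENNReal.ofReal (C i - t) := by
  set s : ℝ → ℝ := fun u => ∑ i, f i u
  set m : ℝ → ℝ := fun u => #{i | u < C i}
  have hamgm : ∀ u, ENNReal.ofReal (2 * (s u * √(m u))) ≤
      ENNReal.ofReal (s u ^ 2) + ENNReal.ofReal (m u) := fun u => by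
    rw [← ENNReal.ofReal_add (sq_nonneg _) (Nat.cast_nonneg _)]
    refine ENNReal.ofReal_le_ofReal ?_
    have := two_mul_le_add_sq (s u) √(m u)
    rwa [Real.sq_sqrt (Nat.cast_nonneg _), mul_assoc] at this
  calc ENNReal.ofReal (2 * ∑ k ∈ range n, √((k : ℝ) + 1))
      = 2 * ENNReal.ofReal (∑ k ∈ range n, √((k : ℝ) + 1)) := by
        rw [ENNReal.ofReal_mul zero_le_two, ENNReal.ofReal_ofNat]
    _ ≤ 2 * ∫⁻ u in Ioi t, ENNReal.ofReal (s u * √(m u)) := by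
        gcongr
        exact ofReal_sum_sqrt_le_lintegral_mul_sqrt_card hf hf0 hC hwork
    _ = ∫⁻ u in Ioi t, ENNReal.ofReal (2 * (s u * √(m u))) := by
        rw [← lintegral_const_mul' _ _ ENNReal.ofNat_ne_top]
        simp_rw [ENNReal.ofReal_mul zero_le_two, ENNReal.ofReal_ofNat]
    _ ≤ ∫⁻ u in Ioi t, ENNReal.ofReal (s u ^ 2) + ENNReal.ofReal (m u) := lintegral_mono hamgm
    _ = (∫⁻ u in Ioi t, ENNReal.ofReal (s u ^ 2)) + ∑ i, ENNReal.ofReal (C i - t) := by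
        rw [lintegral_add_left (by fun_prop), lintegral_card_lt]

end LowerBound

lemma exists_equiv_fin_monotone {α β : Type*} [LinearOrder β] {K : Finset α} {n : ℕ}
    (hcard : #K = n) (c : α → β) : ∃ e : Fin n ≃ K, Monotone fun i => c (e i) := by
  let e₀ := (K.equivFinOfCardEq hcard).symm
  exact ⟨(Tuple.sort fun i => c (e₀ i)).trans e₀, Tuple.monotone_sort (fun i => c (e₀ i))⟩

theorem ofReal_two_mul_sum_sqrt_le_cost {n : ℕ} {t : ℝ} {K : Finset Job} {S : Sched}
    (ht : 0 ≤ t) (hcard : #K = n) (hjobs : ∀ j ∈ K, j.r = t ∧ j.p = 1) (hS : Feasible K S) :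
    ENNReal.ofReal (2 * ∑ k ∈ range n, √((k : ℝ) + 1)) ≤ cost S K := by
  by_cases hinf : ∀ j ∈ K, ctime S j ≠ ⊤
  swap
  · obtain ⟨j, hj, htop⟩ : ∃ j ∈ K, ctime S j = ⊤ := by simpa using hinf
    have : flowTime S K = ⊤ := ENNReal.sum_eq_top.2 ⟨j, hj, by simp [htop]⟩
    simp [cost, this]
  set c : Job → ℝ := fun j => (ctime S j).toReal
  have hp : ∀ j ∈ K, j.p ≠ 0 := fun j hj => by simp [(hjobs j hj).2]
  have hwork : ∀ j ∈ K, 1 ≤ ∫⁻ u in Ioo t (c j), ENNReal.ofReal (S j u) := fun j hj => by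
    obtain ⟨hr, hp1⟩ := hjobs j hj
    have hc := (release_le_and_work_eq_zero_at_ctime hS hj (hp j hj) (hr ▸ ht) (hinf j hj)).2
    rw [← hr, lintegral_Ioo_eq_of_work_eq_zero hS hj (hp j hj) hc, hp1, ENNReal.ofReal_one]
  have hflow : ∀ j ∈ K, ENNReal.ofReal (c j - t) = ctime S j - ENNReal.ofReal j.r := fun j hj => by
    rw [(hjobs j hj).1, ENNReal.ofReal_sub _ ht, ENNReal.ofReal_toReal (hinf j hj)]
  obtain ⟨e, he⟩ := exists_equiv_fin_monotone hcard c
  have hsum : ∀ {M : Type} [AddCommMonoid M] (F : Job → M), ∑ i, F (e i) = ∑ j ∈ K, F j :=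
    fun F => by rw [← K.sum_coe_sort F, e.sum_comp (fun j : K => F j)]
  calc ENNReal.ofReal (2 * ∑ k ∈ range n, √((k : ℝ) + 1))
      ≤ (∫⁻ u in Ioi t, ENNReal.ofReal ((∑ i, S (e i) u) ^ 2)) +
          ∑ i, ENNReal.ofReal (c (e i) - t) :=
        ofReal_two_mul_sum_sqrt_le (fun i => (hS _ (e i).2).1) (fun i => (hS _ (e i).2).2.1) he
          fun i => hwork _ (e i).2
    _ ≤ energy K S + flowTime S K := by
        have hs : ∀ u, ∑ i, S (e i) u = ∑ j ∈ K, S j u := fun u => hsum fun j => S j u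
        simp only [hs, hsum fun j => ENNReal.ofReal (c j - t)]
        unfold energy flowTime
        gcongr ?_ + ?_
        · exact lintegral_mono_set (Ioi_subset_Ioi ht)
        · exact (Finset.sum_congr rfl hflow).le

lemma sq_sum_indicator_of_pairwiseDisjoint {ι α : Type*} {s : Finset ι} {I : ι → Set α}
    (hI : (s : Set ι).PairwiseDisjoint I) (c : ι → ℝ) (x : α) :
    (∑ i ∈ s, (I i).indicator (fun _ => c i) x) ^ 2 =
      ∑ i ∈ s, (I i).indicator (fun _ => c i ^ 2) x := by
  by_cases hx : ∃ i ∈ s, x ∈ I i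
  · obtain ⟨i, hi, hxi⟩ := hx
    have hout : ∀ i' ∈ s, i' ≠ i → x ∉ I i' := fun i' hi' hne hxi' =>
      Set.disjoint_left.1 (hI hi' hi hne) hxi' hxi
    rw [Finset.sum_eq_single_of_mem i hi fun i' hi' hne => indicator_of_notMem (hout i' hi' hne) _,
      Finset.sum_eq_single_of_mem i hi fun i' hi' hne => indicator_of_notMem (hout i' hi' hne) _,
      indicator_of_mem hxi, indicator_of_mem hxi]
  · push Not at hx
    rw [Finset.sum_eq_zero fun i hi => indicator_of_notMem (hx i hi) _,
      Finset.sum_eq_zero fun i hi => indicator_of_notMem (hx i hi) _, sq, mul_zero]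

noncomputable def seqStart (v : ℕ → ℝ) (i : ℕ) : ℝ := ∑ l ∈ range i, (v l)⁻¹

noncomputable def seqBlock (t : ℝ) (v : ℕ → ℝ) (i : ℕ) : Set ℝ :=
  Ico (t + seqStart v i) (t + seqStart v (i + 1))

noncomputable def seqSched (t : ℝ) (v : ℕ → ℝ) (idx : Job → ℕ) : Sched :=
  fun j => (seqBlock t v (idx j)).indicator fun _ => v (idx j)

section Sequential

variable {n : ℕ} {t : ℝ} {v : ℕ → ℝ} {idx : Job → ℕ} {K : Finset Job}

lemma seqStart_succ (v : ℕ → ℝ) (i : ℕ) : seqStart v (i + 1) = seqStart v i + (v i)⁻¹ :=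
  Finset.sum_range_succ _ _

lemma monotone_seqStart (hv : ∀ i, 0 ≤ v i) : Monotone (seqStart v) := fun _ _ hab =>
  Finset.sum_le_sum_of_subset_of_nonneg (range_subset_range.2 hab) fun l _ _ => inv_nonneg.2 (hv l)

lemma seqStart_nonneg (hv : ∀ i, 0 ≤ v i) (i : ℕ) : 0 ≤ seqStart v i :=
  Finset.sum_nonneg fun l _ => inv_nonneg.2 (hv l)

lemma seqBlock_subset_Icc (hv : ∀ i, 0 ≤ v i) (i : ℕ) :
    seqBlock t v i ⊆ Icc t (t + seqStart v (i + 1)) := fun _ hu =>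
  ⟨le_trans (le_add_of_nonneg_right (seqStart_nonneg hv i)) hu.1, hu.2.le⟩

lemma pairwiseDisjoint_seqBlock (hv : ∀ i, 0 ≤ v i) :
    Pairwise (Function.onFun Disjoint (seqBlock t v)) :=
  ((monotone_seqStart hv).const_add t).pairwise_disjoint_on_Ico_succ

lemma measurableSet_seqBlock (t : ℝ) (v : ℕ → ℝ) (i : ℕ) : MeasurableSet (seqBlock t v i) :=
  measurableSet_Ico

lemma volume_seqBlock (t : ℝ) (v : ℕ → ℝ) (i : ℕ) :
    volume (seqBlock t v i) = ENNReal.ofReal (v i)⁻¹ := by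
  rw [seqBlock, Real.volume_Ico, seqStart_succ, add_sub_add_left_eq_sub, add_sub_cancel_left]

lemma setIntegral_seqBlock (hv : ∀ i, 0 ≤ v i) {i : ℕ} (hvi : v i ≠ 0) {s : Set ℝ}
    (hs : seqBlock t v i ⊆ s) : ∫ u in s, (seqBlock t v i).indicator (fun _ => v i) u = 1 := by
  rw [setIntegral_indicator (measurableSet_seqBlock t v i), inter_eq_right.2 hs, setIntegral_const,
    measureReal_def, volume_seqBlock, ENNReal.toReal_ofReal (inv_nonneg.2 (hv i)), smul_eq_mul,
    inv_mul_cancel₀ hvi]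

lemma lintegral_ofReal_indicator_seqBlock (t : ℝ) (v : ℕ → ℝ) (i : ℕ) :
    ∫⁻ u, ENNReal.ofReal ((seqBlock t v i).indicator (fun _ => v i ^ 2) u) =
      ENNReal.ofReal (v i) := by
  have hofReal : ∀ u, ENNReal.ofReal ((seqBlock t v i).indicator (fun _ => v i ^ 2) u) =
      (seqBlock t v i).indicator (fun _ => ENNReal.ofReal (v i ^ 2)) u := fun u => by
    by_cases hu : u ∈ seqBlock t v i <;> simp [hu]
  simp_rw [hofReal]
  rw [lintegral_indicator_const (measurableSet_seqBlock t v i), volume_seqBlock,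
    ← ENNReal.ofReal_mul (sq_nonneg _), sq, mul_self_mul_inv]

lemma energy_seqSched_le (hv : ∀ i, 0 ≤ v i) (hinj : Set.InjOn idx K) :
    energy K (seqSched t v idx) ≤ ∑ j ∈ K, ENNReal.ofReal (v (idx j)) := by
  have hdisj : (K : Set Job).PairwiseDisjoint fun j => seqBlock t v (idx j) :=
    fun j hj j' hj' hne => pairwiseDisjoint_seqBlock hv (hinj.ne hj hj' hne)
  calc energy K (seqSched t v idx)
      = ∫⁻ u in Ioi 0, ∑ j ∈ K,
          ENNReal.ofReal ((seqBlock t v (idx j)).indicator (fun _ => v (idx j) ^ 2) u) := by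
        refine lintegral_congr fun u => ?_
        simp only [seqSched]
        rw [sq_sum_indicator_of_pairwiseDisjoint hdisj (fun j => v (idx j)) u,
          ENNReal.ofReal_sum_of_nonneg fun j _ => indicator_nonneg (fun _ _ => sq_nonneg _) u]
    _ ≤ ∫⁻ u, ∑ j ∈ K,
          ENNReal.ofReal ((seqBlock t v (idx j)).indicator (fun _ => v (idx j) ^ 2) u) :=
        setLIntegral_le_lintegral _ _
    _ = ∑ j ∈ K, ENNReal.ofReal (v (idx j)) := by
        rw [lintegral_finsetSum _ fun j _ =>
          (measurable_const.indicator (measurableSet_seqBlock t v (idx j))).ennreal_ofReal]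
        exact Finset.sum_congr rfl fun j _ => lintegral_ofReal_indicator_seqBlock t v (idx j)

variable (hv : ∀ i, 0 ≤ v i) (hjobs : ∀ j ∈ K, j.r = t ∧ j.p = 1)
include hv hjobs

lemma feasible_seqSched (hvK : ∀ j ∈ K, v (idx j) ≠ 0) : Feasible K (seqSched t v idx) := by
  intro j hj
  obtain ⟨hr, hp⟩ := hjobs j hj
  refine ⟨measurable_const.indicator (measurableSet_seqBlock t v _),
    fun u => indicator_nonneg (fun _ _ => hv _) u,
    fun u hu => indicator_of_notMem (fun hmem => ?_) _, ?_⟩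
  · exact (hr ▸ hu).not_ge (seqBlock_subset_Icc hv _ hmem).1
  · rw [hr, hp]
    exact setIntegral_seqBlock hv (hvK j hj) ((seqBlock_subset_Icc hv _).trans Icc_subset_Ici_self)

lemma flowTime_seqSched_le (hvK : ∀ j ∈ K, v (idx j) ≠ 0) :
    flowTime (seqSched t v idx) K ≤ ∑ j ∈ K, ENNReal.ofReal (seqStart v (idx j + 1)) := by
  refine Finset.sum_le_sum fun j hj => ?_
  obtain ⟨hr, hp⟩ := hjobs j hj
  have hwork : work (seqSched t v idx) j (t + seqStart v (idx j + 1)) = 0 := by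
    rw [work, hr, hp, seqSched, setIntegral_seqBlock hv (hvK j hj) (seqBlock_subset_Icc hv _),
      sub_self]
  have hct : ctime (seqSched t v idx) j ≤ ENNReal.ofReal (t + seqStart v (idx j + 1)) :=
    iInf₂_le _ ⟨hr ▸ le_add_of_nonneg_right (seqStart_nonneg hv _), hwork⟩
  rw [hr, tsub_le_iff_left]
  exact hct.trans ENNReal.ofReal_add_le

theorem cost_seqSched_le (hvn : ∀ i < n, v i ≠ 0) (hidx : Set.BijOn idx K (range n : Finset ℕ)) :
    cost (seqSched t v idx) K ≤
      ENNReal.ofReal (∑ i ∈ range n, v i + ∑ i ∈ range n, seqStart v (i + 1)) := by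
  have hvK : ∀ j ∈ K, v (idx j) ≠ 0 := fun j hj => hvn _ (mem_range.1 (hidx.mapsTo hj))
  have hsum : ∀ F : ℕ → ℝ, (∀ i, 0 ≤ F i) →
      ∑ j ∈ K, ENNReal.ofReal (F (idx j)) = ENNReal.ofReal (∑ i ∈ range n, F i) := fun F hF => by
    rw [ENNReal.ofReal_sum_of_nonneg fun i _ => hF i]
    exact Finset.sum_nbij idx (fun _ hj => hidx.mapsTo hj) hidx.injOn hidx.surjOn fun _ _ => rfl
  calc cost (seqSched t v idx) K
      ≤ ∑ j ∈ K, ENNReal.ofReal (v (idx j)) + ∑ j ∈ K, ENNReal.ofReal (seqStart v (idx j + 1)) :=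
        add_le_add (energy_seqSched_le hv hidx.injOn) (flowTime_seqSched_le hv hjobs hvK)
    _ = ENNReal.ofReal (∑ i ∈ range n, v i + ∑ i ∈ range n, seqStart v (i + 1)) := by
        rw [hsum v hv, hsum (fun i => seqStart v (i + 1)) fun i => seqStart_nonneg hv _,
          ENNReal.ofReal_add (Finset.sum_nonneg fun i _ => hv i)
            (Finset.sum_nonneg fun i _ => seqStart_nonneg hv _)]

end Sequential

lemma sum_seqStart_sqrt_sub (n : ℕ) :
    ∑ i ∈ range n, seqStart (fun l => √((n : ℝ) - l)) (i + 1) = ∑ k ∈ range n, √((k : ℝ) + 1) := by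
  simp only [seqStart]
  rw [sum_range_sum_range_succ, ← sum_sqrt_sub_eq_sum_sqrt_succ]
  refine Finset.sum_congr rfl fun l hl => ?_
  rw [nsmul_eq_mul, Nat.cast_sub (mem_range.1 hl).le, ← div_eq_mul_inv, Real.div_sqrt]

theorem opt_le_ofReal_two_mul_sum_sqrt {n : ℕ} {t : ℝ} {K : Finset Job} (hcard : #K = n)
    (hjobs : ∀ j ∈ K, j.r = t ∧ j.p = 1) :
    OPT K ≤ ENNReal.ofReal (2 * ∑ k ∈ range n, √((k : ℝ) + 1)) := by
  obtain ⟨idx, hidx⟩ : ∃ idx : Job → ℕ, Set.BijOn idx K (range n : Finset ℕ) :=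
    K.finite_toSet.exists_bijOn_of_encard_eq (by
      rw [Set.encard_coe_eq_coe_finsetCard, Set.encard_coe_eq_coe_finsetCard, hcard, card_range])
  set v : ℕ → ℝ := fun i => √((n : ℝ) - i)
  have hv : ∀ i, 0 ≤ v i := fun _ => Real.sqrt_nonneg _
  have hvn : ∀ i < n, v i ≠ 0 := fun i hi =>
    (Real.sqrt_pos.2 (sub_pos.2 (Nat.cast_lt.2 hi))).ne'
  have hvK : ∀ j ∈ K, v (idx j) ≠ 0 := fun j hj => hvn _ (mem_range.1 (hidx.mapsTo hj))
  calc OPT K ≤ cost (seqSched t v idx) K := iInf₂_le _ (feasible_seqSched hv hjobs hvK)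
    _ ≤ ENNReal.ofReal (∑ i ∈ range n, v i + ∑ i ∈ range n, seqStart v (i + 1)) :=
        cost_seqSched_le hv hjobs hvn hidx
    _ = ENNReal.ofReal (2 * ∑ k ∈ range n, √((k : ℝ) + 1)) := by
        rw [sum_seqStart_sqrt_sub, sum_sqrt_sub_eq_sum_sqrt_succ, two_mul]

theorem opt_eq_ofReal_two_mul_sum_sqrt {n : ℕ} {t : ℝ} {K : Finset Job} (ht : 0 ≤ t)
    (hcard : #K = n) (hjobs : ∀ j ∈ K, j.r = t ∧ j.p = 1) :
    OPT K = ENNReal.ofReal (2 * ∑ k ∈ range n, √((k : ℝ) + 1)) :=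
  le_antisymm (opt_le_ofReal_two_mul_sum_sqrt hcard hjobs)
    (le_iInf₂ fun _ hS => ofReal_two_mul_sum_sqrt_le_cost ht hcard hjobs hS)

end SimultaneousUnitJobs

theorem opt_simultaneous_unit_jobs_general (n : ℕ) (t : ℝ) (ht : 0 ≤ t)
    (K : Finset Job) (hcard : K.card = n)
    (hjobs : ∀ j ∈ K, j.r = t ∧ j.p = 1) :
    ENNReal.ofReal ((4 / 3) * (n : ℝ) ^ ((3 : ℝ) / 2)) ≤ OPT K ∧
      OPT K ≤ ENNReal.ofReal ((4 / 3) * (((n : ℝ) + 1) ^ ((3 : ℝ) / 2) - 1)) := by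
  rw [SimultaneousUnitJobs.opt_eq_ofReal_two_mul_sum_sqrt ht hcard hjobs]
  exact ⟨ENNReal.ofReal_le_ofReal
      (by linarith [SimultaneousUnitJobs.two_thirds_mul_rpow_le_sum_sqrt n]),
    ENNReal.ofReal_le_ofReal (by linarith [SimultaneousUnitJobs.sum_sqrt_le_two_thirds_mul n])⟩

/-- **Lemma B.3.** For an instance `𝒦` of `n` unit-work jobs all released at
the same time `t ≥ 0`, one has
`(4/3)·n^{3/2} ≤ OPT(𝒦) ≤ (4/3)·((n+1)^{3/2} − 1)`. -/
theorem opt_simultaneous_unit_jobs (n : ℕ) (hn : 1 ≤ n) (t : ℝ) (ht : 0 ≤ t)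
    (K : Finset Job) (hcard : K.card = n)
    (hjobs : ∀ j ∈ K, j.r = t ∧ j.p = 1) :
    ENNReal.ofReal ((4 / 3) * (n : ℝ) ^ ((3 : ℝ) / 2)) ≤ OPT K ∧
      OPT K ≤ ENNReal.ofReal ((4 / 3) * (((n : ℝ) + 1) ^ ((3 : ℝ) / 2) - 1)) :=
  opt_simultaneous_unit_jobs_general n t ht K hcard hjobs
end

section
/- Consider the energy plus flow time objective with α = 2, and let 𝒦 = {j_1, …, j_m} be an instance of m unit-work jobs (p_j = 1) whose release times satisfy r_{i+1} − r_i ≥ 1 for all 1 ≤ i < m. Then OPT(𝒦) = 2m. -/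
open MeasureTheory Finset
open scoped ENNReal BigOperators Classical

/-! Since `s² ≥ 2s - 1`, a unit of work finished within time `L` of its release costs energy at
least `2 - L`, so each unit job contributes at least `2` to energy plus flow time; and since
speeds are nonnegative, `(∑ⱼ sⱼ)² ≥ ∑ⱼ sⱼ²`, so these contributions add up. Conversely, running
each job at speed `1` on `[rⱼ, rⱼ + 1)` is feasible, the gaps make these intervals disjoint, and
every job then costs exactly `1` of energy and `1` of flow time. -/

lemma two_le_lintegral_sq_add_measure_univ {α : Type*} [MeasurableSpace α] {μ : Measure α}
    {g : α → ℝ} (hg : ∫ x, g x ∂μ = 1) :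
    2 ≤ ∫⁻ x, ENNReal.ofReal (g x ^ 2) ∂μ + μ Set.univ := by
  have two_enorm_le (x : ℝ) : 2 * ‖x‖ₑ ≤ ENNReal.ofReal (x ^ 2) + 1 := by
    rw [Real.enorm_eq_ofReal_abs, ← ENNReal.ofReal_ofNat 2, ← ENNReal.ofReal_mul zero_le_two,
      ← ENNReal.ofReal_one, ← ENNReal.ofReal_add (sq_nonneg x) zero_le_one]
    exact ENNReal.ofReal_le_ofReal (by nlinarith [sq_abs x, sq_nonneg (|x| - 1)])
  calc (2 : ℝ≥0∞) = 2 * ‖∫ x, g x ∂μ‖ₑ := by simp [hg]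
    _ ≤ 2 * ∫⁻ x, ‖g x‖ₑ ∂μ := by gcongr; exact enorm_integral_le_lintegral_enorm g
    _ = ∫⁻ x, 2 * ‖g x‖ₑ ∂μ := (lintegral_const_mul' _ _ ENNReal.ofNat_ne_top).symm
    _ ≤ ∫⁻ x, (ENNReal.ofReal (g x ^ 2) + 1) ∂μ := lintegral_mono fun x => two_enorm_le (g x)
    _ = ∫⁻ x, ENNReal.ofReal (g x ^ 2) ∂μ + μ Set.univ := by
      rw [lintegral_add_right _ measurable_const, lintegral_one]

noncomputable def jobEnergy (S : Sched) (j : Job) : ℝ≥0∞ :=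
  ∫⁻ t in Set.Ioi (0 : ℝ), ENNReal.ofReal (S j t ^ 2)

lemma sum_jobEnergy_le_energy (J : Finset Job) (S : Sched)
    (hmeas : ∀ j ∈ J, Measurable (S j)) (hnonneg : ∀ j ∈ J, ∀ t, 0 ≤ S j t) :
    ∑ j ∈ J, jobEnergy S j ≤ energy J S := by
  simp only [energy, jobEnergy]
  rw [← lintegral_finsetSum (f := fun j t => ENNReal.ofReal (S j t ^ 2)) J fun j hj =>
    ENNReal.measurable_ofReal.comp ((hmeas j hj).pow_const 2)]
  refine lintegral_mono fun t => ?_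
  rw [← ENNReal.ofReal_sum_of_nonneg fun j _ => sq_nonneg (S j t)]
  exact ENNReal.ofReal_le_ofReal (sum_sq_le_sq_sum_of_nonneg fun j hj => hnonneg j hj t)

lemma two_le_jobEnergy_add_of_work_eq_zero (S : Sched) {j : Job} (hr : 0 ≤ j.r) (hp : j.p = 1)
    {t : ℝ} (ht : work S j t = 0) :
    2 ≤ jobEnergy S j + ENNReal.ofReal (t - j.r) := by
  have hunit : ∫ u in Set.Ioc j.r t, S j u = 1 := by
    rw [work, hp] at ht
    rw [← integral_Icc_eq_integral_Ioc]
    linarith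
  calc (2 : ℝ≥0∞)
        ≤ (∫⁻ u in Set.Ioc j.r t, ENNReal.ofReal (S j u ^ 2)) + volume (Set.Ioc j.r t) := by
        simpa only [Measure.restrict_apply_univ] using two_le_lintegral_sq_add_measure_univ hunit
    _ ≤ jobEnergy S j + ENNReal.ofReal (t - j.r) := by
        rw [Real.volume_Ioc]
        exact add_le_add (lintegral_mono_set fun u hu => hr.trans_lt hu.1) le_rfl

lemma two_le_jobEnergy_add_flow (S : Sched) {j : Job} (hr : 0 ≤ j.r) (hp : j.p = 1) :
    2 ≤ jobEnergy S j + (ctime S j - ENNReal.ofReal j.r) := by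
  have hcompleted : 2 + ENNReal.ofReal j.r ≤ jobEnergy S j + ctime S j := by
    simp only [ctime, ENNReal.add_iInf]
    refine le_iInf₂ fun t ht => ?_
    calc 2 + ENNReal.ofReal j.r
        ≤ jobEnergy S j + ENNReal.ofReal (t - j.r) + ENNReal.ofReal j.r := by
          gcongr; exact two_le_jobEnergy_add_of_work_eq_zero S hr hp ht.2
      _ = jobEnergy S j + ENNReal.ofReal t := by
          rw [add_assoc, ← ENNReal.ofReal_add (sub_nonneg.2 ht.1) hr, sub_add_cancel]
  calc (2 : ℝ≥0∞) = 2 + ENNReal.ofReal j.r - ENNReal.ofReal j.r :=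
        (ENNReal.add_sub_cancel_right ENNReal.ofReal_ne_top).symm
    _ ≤ jobEnergy S j + ctime S j - ENNReal.ofReal j.r := tsub_le_tsub_right hcompleted _
    _ ≤ jobEnergy S j + (ctime S j - ENNReal.ofReal j.r) := add_tsub_le_assoc

lemma two_mul_card_le_cost {J : Finset Job} {S : Sched} (hS : Feasible J S)
    (hr : ∀ j ∈ J, 0 ≤ j.r) (hp : ∀ j ∈ J, j.p = 1) :
    2 * (J.card : ℝ≥0∞) ≤ cost S J :=
  calc 2 * (J.card : ℝ≥0∞) = ∑ _j ∈ J, 2 := by rw [sum_const, nsmul_eq_mul, mul_comm]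
    _ ≤ ∑ j ∈ J, (jobEnergy S j + (ctime S j - ENNReal.ofReal j.r)) :=
        sum_le_sum fun j hj => two_le_jobEnergy_add_flow S (hr j hj) (hp j hj)
    _ = ∑ j ∈ J, jobEnergy S j + flowTime S J := sum_add_distrib
    _ ≤ cost S J := by
        refine add_le_add (sum_jobEnergy_le_energy J S ?_ ?_) le_rfl
        exacts [fun j hj => (hS j hj).1, fun j hj => (hS j hj).2.1]

noncomputable def unitSpeedSched : Sched :=
  fun j => (Set.Ico j.r (j.r + 1)).indicator 1

lemma setIntegral_unitSpeedSched {j : Job} {s : Set ℝ}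
    (hsub : Set.Ico j.r (j.r + 1) ⊆ s) :
    ∫ t in s, unitSpeedSched j t = 1 := by
  rw [unitSpeedSched, integral_indicator_one measurableSet_Ico, measureReal_restrict_apply
    measurableSet_Ico, Set.inter_eq_left.2 hsub, Real.volume_real_Ico]
  simp

lemma feasible_unitSpeedSched {J : Finset Job} (hp : ∀ j ∈ J, j.p = 1) :
    Feasible J unitSpeedSched := fun j hj =>
  ⟨measurable_one.indicator measurableSet_Ico,
    fun _ => Set.indicator_nonneg (fun _ _ => zero_le_one) _,
    fun _ ht => Set.indicator_of_notMem (fun h => ht.not_ge h.1) _,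
    by rw [setIntegral_unitSpeedSched Set.Ico_subset_Ici_self, hp j hj]⟩

lemma ctime_unitSpeedSched_le {j : Job} (hp : j.p = 1) :
    ctime unitSpeedSched j ≤ ENNReal.ofReal (j.r + 1) := by
  refine iInf₂_le (j.r + 1) ⟨by linarith, ?_⟩
  rw [work, hp, setIntegral_unitSpeedSched Set.Ico_subset_Icc_self, sub_self]

lemma flowTime_unitSpeedSched_le {J : Finset Job} (hr : ∀ j ∈ J, 0 ≤ j.r)
    (hp : ∀ j ∈ J, j.p = 1) :
    flowTime unitSpeedSched J ≤ J.card := by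
  calc flowTime unitSpeedSched J ≤ ∑ _j ∈ J, (1 : ℝ≥0∞) := by
        refine sum_le_sum fun j hj => ?_
        calc ctime unitSpeedSched j - ENNReal.ofReal j.r
            ≤ ENNReal.ofReal (j.r + 1) - ENNReal.ofReal j.r :=
              tsub_le_tsub_right (ctime_unitSpeedSched_le (hp j hj)) _
          _ = 1 := by
              rw [ENNReal.ofReal_add (hr j hj) zero_le_one, ENNReal.ofReal_one,
                ENNReal.add_sub_cancel_left ENNReal.ofReal_ne_top]
    _ = J.card := by simp

lemma energy_unitSpeedSched_le {J : Finset Job}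
    (hdisj : (J : Set Job).PairwiseDisjoint fun j => Set.Ico j.r (j.r + 1)) :
    energy J unitSpeedSched ≤ J.card := by
  set U := ⋃ j ∈ J, Set.Ico j.r (j.r + 1)
  have hsum (t : ℝ) : ∑ j ∈ J, unitSpeedSched j t = U.indicator 1 t :=
    (congrFun (Finset.indicator_biUnion J _ hdisj) t).symm
  have hsq (t : ℝ) :
      ENNReal.ofReal ((∑ j ∈ J, unitSpeedSched j t) ^ 2) = U.indicator 1 t := by
    rw [hsum]
    by_cases ht : t ∈ U <;> simp [ht]
  calc energy J unitSpeedSched = ∫⁻ t in Set.Ioi 0, U.indicator 1 t := by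
        simp only [energy, hsq]
    _ ≤ ∫⁻ t, U.indicator 1 t := setLIntegral_le_lintegral _ _
    _ = volume U := lintegral_indicator_one (J.measurableSet_biUnion fun _ _ => measurableSet_Ico)
    _ ≤ ∑ j ∈ J, volume (Set.Ico j.r (j.r + 1)) := measure_biUnion_finset_le J _
    _ = J.card := by simp

lemma OPT_eq_two_mul_card {J : Finset Job} (hr : ∀ j ∈ J, 0 ≤ j.r) (hp : ∀ j ∈ J, j.p = 1)
    (hdisj : (J : Set Job).PairwiseDisjoint fun j => Set.Ico j.r (j.r + 1)) :
    OPT J = 2 * J.card := by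
  refine le_antisymm ?_ (le_iInf₂ fun S hS => two_mul_card_le_cost hS hr hp)
  calc OPT J ≤ cost unitSpeedSched J := iInf₂_le _ (feasible_unitSpeedSched hp)
    _ ≤ J.card + J.card :=
        add_le_add (energy_unitSpeedSched_le hdisj) (flowTime_unitSpeedSched_le hr hp)
    _ = 2 * J.card := (two_mul _).symm

lemma add_one_le_of_lt_of_forall_add_one_le {m : ℕ} (r : Fin m → ℝ)
    (hgap : ∀ (i : ℕ) (h : i + 1 < m), 1 ≤ r ⟨i + 1, h⟩ - r ⟨i, Nat.lt_of_succ_lt h⟩)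
    {i k : Fin m} (hik : i < k) : r i + 1 ≤ r k := by
  obtain ⟨k, hk⟩ := k
  induction k with
  | zero => exact absurd (Fin.lt_def.1 hik) (Nat.not_lt_zero _)
  | succ k ih =>
    rcases Nat.lt_succ_iff_lt_or_eq.1 (Fin.lt_def.1 hik) with hlt | heq
    · linarith [ih (Nat.lt_of_succ_lt hk) (Fin.lt_def.2 hlt), hgap k hk]
    · have : i = ⟨k, Nat.lt_of_succ_lt hk⟩ := Fin.ext heq
      subst this
      linarith [hgap k hk]

theorem opt_spread_unit_jobs_general (m : ℕ)
    (f : Fin m → Job)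
    (hval : ValidInstance (Finset.univ.image f))
    (hp : ∀ i, (f i).p = 1)
    (hgap : ∀ (i : ℕ) (h : i + 1 < m),
      1 ≤ (f ⟨i + 1, h⟩).r - (f ⟨i, Nat.lt_of_succ_lt h⟩).r) :
    OPT (Finset.univ.image f) = ENNReal.ofReal (2 * m) := by
  have hspread {i k : Fin m} (hik : i < k) : (f i).r + 1 ≤ (f k).r :=
    add_one_le_of_lt_of_forall_add_one_le (fun i => (f i).r) hgap hik
  have hinj : Function.Injective f :=
    (StrictMono.injective (f := fun i => (f i).r) fun i k hik => by linarith [hspread hik]).of_comp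
  have hdisj : ((univ.image f : Finset Job) : Set Job).PairwiseDisjoint
      fun j => Set.Ico j.r (j.r + 1) := by
    rw [coe_image, coe_univ, hinj.injOn.pairwiseDisjoint_image]
    refine ((pairwise_disjoint_on _).2 fun i k hik => Set.Ico_disjoint_Ico.2 ?_).set_pairwise _
    exact min_le_left _ _ |>.trans <| (hspread hik).trans (le_max_right _ _)
  rw [OPT_eq_two_mul_card (fun j hj => (hval j hj).1) (forall_mem_image.2 fun i _ => hp i) hdisj,
    card_image_of_injective _ hinj, card_univ, Fintype.card_fin]
  simp [ENNReal.ofReal_mul]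

/-- **Lemma B.4.** For an instance `𝒦 = {j_1, …, j_m}` of `m` unit-work jobs
with `r_{i+1} − r_i ≥ 1` for all `i`, one has `OPT(𝒦) = 2m`. -/
theorem opt_spread_unit_jobs (m : ℕ) (hm : 1 ≤ m)
    (f : Fin m → Job) (hinj : Function.Injective f)
    (hval : ValidInstance (Finset.univ.image f))
    (hp : ∀ i, (f i).p = 1)
    (hgap : ∀ (i : ℕ) (h : i + 1 < m),
      1 ≤ (f ⟨i + 1, h⟩).r - (f ⟨i, Nat.lt_of_succ_lt h⟩).r) :
    OPT (Finset.univ.image f) = ENNReal.ofReal (2 * m) :=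
  opt_spread_unit_jobs_general m f hval hp hgap
end
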